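/- arXiv:1707.08277 — 7 statements merged into one kernel-verified Lean document; each statement's English description precedes it below -/
import Mathlib

section
/- Let A be an n×n real symmetric positive definite matrix with energy decomposition ℰ = {E_k}_{k=1}^m, and let S ⊆ {1,…,n}. Then the interior energy, restricted energy, and closed energy of S satisfy underline(A)_S ⪯ A_S ⪯ overline(A)_S in the Loewner order, where A_S = P_S A P_S. -/
open Matrix BigOperators
open scoped Classical

noncomputable section

/-- The 0/1 diagonal projection matrix onto the coordinates in `S`. -/
def projSet {n : ℕ} (S : Finset (Fin n)) : Matrix (Fin n) (Fin n) ℝ :=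
  Matrix.diagonal (fun i => if i ∈ S then (1:ℝ) else 0)

/-- The diagonal concentration `E^d` of `E`: diagonal with entries `∑_j |E_{ij}|`. -/
def diagConc {n : ℕ} (E : Matrix (Fin n) (Fin n) ℝ) : Matrix (Fin n) (Fin n) ℝ :=
  Matrix.diagonal (fun i => ∑ j, |E i j|)

/-- `E` is interior to `S` if `P_S E P_S = E`. -/
def InteriorTo {n : ℕ} (E : Matrix (Fin n) (Fin n) ℝ) (S : Finset (Fin n)) : Prop :=
  projSet S * E * projSet S = E

/-- The interior energy `underline(A)_S = ∑_{E_k interior to S} E_k`. -/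
def interiorEnergy {n m : ℕ} (E : Fin m → Matrix (Fin n) (Fin n) ℝ) (S : Finset (Fin n)) :
    Matrix (Fin n) (Fin n) ℝ :=
  ∑ k, if InteriorTo (E k) S then E k else 0

/-- The closed energy
`overline(A)_S = underline(A)_S + ∑_{E_k not interior to S} P_S E_k^d P_S`. -/
def closedEnergy {n m : ℕ} (E : Fin m → Matrix (Fin n) (Fin n) ℝ) (S : Finset (Fin n)) :
    Matrix (Fin n) (Fin n) ℝ :=
  interiorEnergy E S +
    ∑ k, if InteriorTo (E k) S then 0 else projSet S * diagConc (E k) * projSet S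

/-- A partition of `{1,…,n}` into pairwise disjoint nonempty subsets covering everything. -/
def IsPartition {n M : ℕ} (P : Fin M → Finset (Fin n)) : Prop :=
  (∀ j, (P j).Nonempty) ∧ (∀ j j', j ≠ j' → Disjoint (P j) (P j')) ∧
    Finset.univ.biUnion P = Finset.univ

/-- Euclidean norm of a vector. -/
def norm2 {ι : Type} [Fintype ι] (x : ι → ℝ) : ℝ := Real.sqrt (x ⬝ᵥ x)

/-- `A`-energy norm of a vector: `‖x‖_A = √(xᵀ A x)`. -/
def normA {ι : Type} [Fintype ι] (A : Matrix ι ι ℝ) (x : ι → ℝ) : ℝ :=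
  Real.sqrt (x ⬝ᵥ A.mulVec x)

/-- Spectral (ℓ²-operator) norm of a square real matrix. -/
def specNorm {ι : Type} [Fintype ι] [DecidableEq ι] (B : Matrix ι ι ℝ) : ℝ :=
  ‖Matrix.toEuclideanCLM (𝕜 := ℝ) B‖

/-- Smallest value of the Rayleigh quotient; for a symmetric matrix this is the
smallest eigenvalue. -/
def lamMin {ι : Type} [Fintype ι] (B : Matrix ι ι ℝ) : ℝ :=
  sInf {r : ℝ | ∃ x : ι → ℝ, x ⬝ᵥ x = 1 ∧ r = x ⬝ᵥ B.mulVec x}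

/-- Largest value of the Rayleigh quotient; for a symmetric matrix this is the
largest eigenvalue. -/
def lamMax {ι : Type} [Fintype ι] (B : Matrix ι ι ℝ) : ℝ :=
  sSup {r : ℝ | ∃ x : ι → ℝ, x ⬝ᵥ x = 1 ∧ r = x ⬝ᵥ B.mulVec x}

/-- Patch layers: `S_0(P_j) = P_j` and `S_{k+1}(P_j)` adds all patches `P_{j'}` such that
some energy element has a nonzero row indexed in `P_{j'}` and a nonzero row indexed in
`S_k(P_j)`. -/
def layer {n m M : ℕ} (E : Fin m → Matrix (Fin n) (Fin n) ℝ) (P : Fin M → Finset (Fin n))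
    (j : Fin M) : ℕ → Finset (Fin n)
  | 0 => P j
  | (k+1) => layer E P j k ∪ Finset.univ.biUnion (fun j' =>
      if (∃ l, (∃ r ∈ P j', (E l) r ≠ 0) ∧ (∃ r ∈ layer E P j k, (E l) r ≠ 0))
      then P j' else ∅)

/-- Condition factor `δ(P_j) = ‖(Φ̂_jᵀ (overline(A)_{P_j}|_{P_j})⁻¹ Φ̂_j)⁻¹‖₂`, where
`Φ̂_j` is the submatrix of `Φ_j` on the rows in `P_j` and `overline(A)_{P_j}|_{P_j}` is the
submatrix of the closed energy on the rows and columns in `P_j`. -/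
def condFactor {n m : ℕ} (E : Fin m → Matrix (Fin n) (Fin n) ℝ) (S : Finset (Fin n))
    {qj : ℕ} (Φj : Matrix (Fin n) (Fin qj) ℝ) : ℝ :=
  specNorm ((((Φj.submatrix (Subtype.val : {i // i ∈ S} → Fin n) id))ᵀ *
      ((closedEnergy E S).submatrix (Subtype.val : {i // i ∈ S} → Fin n) Subtype.val)⁻¹ *
      (Φj.submatrix (Subtype.val : {i // i ∈ S} → Fin n) id))⁻¹)

/-- The combined matrix `Φ = [Φ_1 ⋯ Φ_M]`, with columns indexed by pairs `⟨j, c⟩`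
(column `c` of the block `Φ_j`). -/
def bigPhi {n M : ℕ} (q : Fin M → ℕ) (Φ : (j : Fin M) → Matrix (Fin n) (Fin (q j)) ℝ) :
    Matrix (Fin n) ((j : Fin M) × Fin (q j)) ℝ :=
  fun r c => Φ c.1 r c.2

/-- `ψ` is a minimizer of `‖x‖_A` over vectors supported in `S` subject to `Φᵀ x = e_i`. -/
def IsMinimizerOn {n : ℕ} {ι : Type} [Fintype ι] [DecidableEq ι]
    (A : Matrix (Fin n) (Fin n) ℝ) (Φ : Matrix (Fin n) ι ℝ) (S : Finset (Fin n)) (i : ι)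
    (ψ : Fin n → ℝ) : Prop :=
  (∀ r, r ∉ S → ψ r = 0) ∧ Φᵀ.mulVec ψ = Pi.single i 1 ∧
    ∀ x : Fin n → ℝ, (∀ r, r ∉ S → x r = 0) → Φᵀ.mulVec x = Pi.single i 1 →
      ψ ⬝ᵥ A.mulVec ψ ≤ x ⬝ᵥ A.mulVec x

/-- `α(P_j)`: the largest value of `(xᵀ overline(A)_{P_j} x)/(xᵀ underline(A)_{P_j} x)`
over nonzero `x` in the column span of `U_j`. -/
def alphaFactor {n m : ℕ} (E : Fin m → Matrix (Fin n) (Fin n) ℝ) (S : Finset (Fin n))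
    {uj : ℕ} (Uj : Matrix (Fin n) (Fin uj) ℝ) : ℝ :=
  sSup {r : ℝ | ∃ x ∈ Submodule.span ℝ (Set.range Ujᵀ), x ≠ 0 ∧
    r = (x ⬝ᵥ (closedEnergy E S).mulVec x) / (x ⬝ᵥ (interiorEnergy E S).mulVec x)}

/-!
Since `A = ∑ E_k`, the restriction `P_S A P_S` is `∑ P_S E_k P_S`, and `P_S E_k P_S = E_k` for the
interior `E_k`. Dropping the positive semidefinite terms `P_S E_k P_S` of the other `E_k` gives the
lower bound; replacing them by `P_S E_kᵈ P_S` gives the upper bound, because `E_kᵈ - E_k` is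
positive semidefinite: `2 xᵢ Eᵢⱼ xⱼ ≤ |Eᵢⱼ| (xᵢ² + xⱼ²)` termwise in the quadratic form.
-/

lemma projSet_conjTranspose {n : ℕ} (S : Finset (Fin n)) : (projSet S)ᴴ = projSet S := by
  simp [projSet]

lemma Matrix.PosSemidef.projSet_mul_mul_projSet {n : ℕ} {X : Matrix (Fin n) (Fin n) ℝ}
    (hX : X.PosSemidef) (S : Finset (Fin n)) : (projSet S * X * projSet S).PosSemidef := by
  simpa only [projSet_conjTranspose] using hX.mul_mul_conjTranspose_same (projSet S)

lemma two_mul_mul_mul_le_abs_mul_sq_add_sq (a b c : ℝ) :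
    2 * (a * c * b) ≤ |c| * (a ^ 2 + b ^ 2) := by
  have hab : 2 * (a * b) ≤ 2 * (|a| * |b|) := by
    rw [← abs_mul]; exact mul_le_mul_of_nonneg_left (le_abs_self _) zero_le_two
  have hc : 2 * (a * c * b) ≤ |c| * (2 * (|a| * |b|)) := by
    calc 2 * (a * c * b) ≤ |2 * (a * c * b)| := le_abs_self _
      _ = |c| * (2 * (|a| * |b|)) := by simp only [abs_mul, abs_two]; ring
  nlinarith [abs_nonneg c, sq_nonneg (|a| - |b|), sq_abs a, sq_abs b]

lemma posSemidef_diagConc_sub {n : ℕ} {E : Matrix (Fin n) (Fin n) ℝ} (hE : E.IsHermitian) :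
    (diagConc E - E).PosSemidef := by
  refine .of_dotProduct_mulVec_nonneg ((isHermitian_diagonal _).sub hE) fun x => ?_
  have hsymm : ∀ i j, E j i = E i j := fun i j => by simpa using congrFun₂ hE i j
  have hdiag : x ⬝ᵥ diagConc E *ᵥ x = ∑ i, ∑ j, |E i j| * x i ^ 2 := by
    simp only [diagConc, dotProduct, mulVec_diagonal, Finset.sum_mul, Finset.mul_sum]
    exact Finset.sum_congr rfl fun i _ => Finset.sum_congr rfl fun j _ => by ring
  have hdiag' : x ⬝ᵥ diagConc E *ᵥ x = ∑ i, ∑ j, |E i j| * x j ^ 2 := by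
    rw [hdiag, Finset.sum_comm]; simp only [hsymm]
  have hquad : x ⬝ᵥ E *ᵥ x = ∑ i, ∑ j, x i * E i j * x j := by
    simp only [dotProduct, mulVec, Finset.mul_sum]
    exact Finset.sum_congr rfl fun i _ => Finset.sum_congr rfl fun j _ => by ring
  have hbound : 2 * (x ⬝ᵥ E *ᵥ x) ≤ x ⬝ᵥ diagConc E *ᵥ x + x ⬝ᵥ diagConc E *ᵥ x := by
    nth_rewrite 2 [hdiag']
    rw [hdiag, hquad, Finset.mul_sum, ← Finset.sum_add_distrib]
    refine Finset.sum_le_sum fun i _ => ?_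
    rw [Finset.mul_sum, ← Finset.sum_add_distrib]
    refine Finset.sum_le_sum fun j _ => ?_
    linarith [two_mul_mul_mul_le_abs_mul_sq_add_sq (x i) (x j) (E i j)]
  simp only [star_trivial, sub_mulVec, dotProduct_sub]
  linarith

lemma posSemidef_projSet_mul_mul_projSet_sub_ite {n : ℕ} {E : Matrix (Fin n) (Fin n) ℝ}
    (hE : E.PosSemidef) (S : Finset (Fin n)) :
    (projSet S * E * projSet S - if InteriorTo E S then E else 0).PosSemidef := by
  split_ifs with h
  · rw [h, sub_self]
    exact .zero
  · simpa only [sub_zero] using hE.projSet_mul_mul_projSet S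

lemma posSemidef_ite_sub_projSet_mul_mul_projSet {n : ℕ} {E : Matrix (Fin n) (Fin n) ℝ}
    (hE : E.IsHermitian) (S : Finset (Fin n)) :
    ((if InteriorTo E S then E else projSet S * diagConc E * projSet S) -
      projSet S * E * projSet S).PosSemidef := by
  split_ifs with h
  · rw [h, sub_self]
    exact .zero
  · rw [← Matrix.sub_mul, ← Matrix.mul_sub]
    exact (posSemidef_diagConc_sub hE).projSet_mul_mul_projSet S

lemma closedEnergy_eq_sum {n m : ℕ} (E : Fin m → Matrix (Fin n) (Fin n) ℝ) (S : Finset (Fin n)) :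
    closedEnergy E S =
      ∑ k, if InteriorTo (E k) S then E k else projSet S * diagConc (E k) * projSet S := by
  rw [closedEnergy, interiorEnergy, ← Finset.sum_add_distrib]
  refine Finset.sum_congr rfl fun k _ => ?_
  split_ifs <;> simp only [add_zero, zero_add]

theorem interiorEnergy_le_restricted_le_closedEnergy_general {n m : ℕ}
    (A : Matrix (Fin n) (Fin n) ℝ)
    (E : Fin m → Matrix (Fin n) (Fin n) ℝ) (hE : ∀ k, (E k).PosSemidef)
    (hsum : A = ∑ k, E k) (S : Finset (Fin n)) :
    (projSet S * A * projSet S - interiorEnergy E S).PosSemidef ∧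
      (closedEnergy E S - projSet S * A * projSet S).PosSemidef := by
  have hrestrict : projSet S * A * projSet S = ∑ k, projSet S * E k * projSet S := by
    rw [hsum, Finset.mul_sum, Finset.sum_mul]
  rw [hrestrict, interiorEnergy, closedEnergy_eq_sum, ← Finset.sum_sub_distrib,
    ← Finset.sum_sub_distrib]
  exact ⟨posSemidef_sum _ fun k _ => posSemidef_projSet_mul_mul_projSet_sub_ite (hE k) S,
    posSemidef_sum _ fun k _ => posSemidef_ite_sub_projSet_mul_mul_projSet (hE k).isHermitian S⟩

/-- Let `A` be SPD with energy decomposition `{E_k}`, and `S ⊆ {1,…,n}`.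
Then `underline(A)_S ⪯ A_S ⪯ overline(A)_S` in the Loewner order, where `A_S = P_S A P_S`. -/
theorem interiorEnergy_le_restricted_le_closedEnergy {n m : ℕ}
    (A : Matrix (Fin n) (Fin n) ℝ) (hA : A.PosDef)
    (E : Fin m → Matrix (Fin n) (Fin n) ℝ) (hE : ∀ k, (E k).PosSemidef)
    (hsum : A = ∑ k, E k) (S : Finset (Fin n)) :
    (projSet S * A * projSet S - interiorEnergy E S).PosSemidef ∧
      (closedEnergy E S - projSet S * A * projSet S).PosSemidef :=
  interiorEnergy_le_restricted_le_closedEnergy_general A E hE hsum S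
end
end

section
/- Let A be an n×n real symmetric positive definite matrix, Φ a subspace of ℝⁿ, P_Φ the Euclidean orthogonal projection onto Φ, Ψ = A⁻¹(Φ) = {A⁻¹φ : φ ∈ Φ}, and P^A_Ψ the orthogonal projection onto Ψ with respect to the inner product ⟨x,y⟩_A = xᵀA y. If ‖x − P_Φ x‖₂ ≤ ε‖x‖_A for all x ∈ ℝⁿ, for some ε > 0, then: (1) for every x ∈ ℝⁿ with b = Ax, ‖x − P^A_Ψ x‖_A ≤ ε‖b‖₂; (2) for every x ∈ ℝⁿ with b = Ax, ‖x − P^A_Ψ x‖₂ ≤ ε²‖b‖₂; (3) ‖A⁻¹ − P^A_Ψ A⁻¹‖₂ ≤ ε². -/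
open Matrix BigOperators

noncomputable section

/-- Let `A` be SPD, `Φ` a subspace of `ℝⁿ`, `P_Φ` the Euclidean
orthogonal projection onto `Φ`, `Ψ = A⁻¹(Φ)`, and `P^A_Ψ` the `A`-orthogonal projection
onto `Ψ`.  If `‖x − P_Φ x‖₂ ≤ ε ‖x‖_A` for all `x`, then
(1) `‖x − P^A_Ψ x‖_A ≤ ε ‖Ax‖₂`; (2) `‖x − P^A_Ψ x‖₂ ≤ ε² ‖Ax‖₂`;
(3) `‖A⁻¹ b − P^A_Ψ (A⁻¹ b)‖₂ ≤ ε² ‖b‖₂` for all `b`, i.e. `‖A⁻¹ − P^A_Ψ A⁻¹‖₂ ≤ ε²`. -/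
theorem compression_error_of_coarse_space {n : ℕ}
    (A : Matrix (Fin n) (Fin n) ℝ) (hA : A.PosDef)
    (Φ : Submodule ℝ (Fin n → ℝ))
    (pΦ : (Fin n → ℝ) → (Fin n → ℝ))
    (hpΦ : ∀ x, pΦ x ∈ Φ ∧ ∀ y ∈ Φ, (x - pΦ x) ⬝ᵥ y = 0)
    (pΨ : (Fin n → ℝ) → (Fin n → ℝ))
    (hpΨ : ∀ x, pΨ x ∈ Φ.map (Matrix.mulVecLin A⁻¹) ∧
      ∀ y ∈ Φ.map (Matrix.mulVecLin A⁻¹), (x - pΨ x) ⬝ᵥ A.mulVec y = 0)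
    (ε : ℝ) (hε : 0 < ε)
    (happrox : ∀ x : Fin n → ℝ, norm2 (x - pΦ x) ≤ ε * normA A x) :
    (∀ x : Fin n → ℝ, normA A (x - pΨ x) ≤ ε * norm2 (A.mulVec x)) ∧
    (∀ x : Fin n → ℝ, norm2 (x - pΨ x) ≤ ε ^ 2 * norm2 (A.mulVec x)) ∧
    (∀ b : Fin n → ℝ,
      norm2 (A⁻¹.mulVec b - pΨ (A⁻¹.mulVec b)) ≤ ε ^ 2 * norm2 b) := by
  -- basic facts
  have hdotself : ∀ y : Fin n → ℝ, 0 ≤ y ⬝ᵥ y := fun y =>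
    Finset.sum_nonneg fun i _ => mul_self_nonneg _
  have hnorm2_nonneg : ∀ y : Fin n → ℝ, 0 ≤ norm2 y := fun y => Real.sqrt_nonneg _
  have hnormA_nonneg : ∀ y : Fin n → ℝ, 0 ≤ normA A y := fun y => Real.sqrt_nonneg _
  have hnorm2_sq : ∀ y : Fin n → ℝ, norm2 y ^ 2 = y ⬝ᵥ y := fun y =>
    Real.sq_sqrt (hdotself y)
  have hquad : ∀ y : Fin n → ℝ, 0 ≤ y ⬝ᵥ A.mulVec y := by
    intro y
    simpa using hA.posSemidef.re_dotProduct_nonneg y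
  have hnormA_sq : ∀ y : Fin n → ℝ, normA A y ^ 2 = y ⬝ᵥ A.mulVec y := fun y =>
    Real.sq_sqrt (hquad y)
  have hCS : ∀ y z : Fin n → ℝ, y ⬝ᵥ z ≤ norm2 y * norm2 z := by
    intro y z
    have := Real.sum_mul_le_sqrt_mul_sqrt Finset.univ y z
    simpa [norm2, dotProduct, sq] using this
  -- A * A⁻¹ = 1
  have hAinv : ∀ φ : Fin n → ℝ, A.mulVec (A⁻¹.mulVec φ) = φ := by
    intro φ
    rw [Matrix.mulVec_mulVec, Matrix.mul_nonsing_inv A hA.det_pos.ne'.isUnit,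
      Matrix.one_mulVec]
  -- e := x - pΨ x is Euclidean-orthogonal to Φ
  have heperp : ∀ x : Fin n → ℝ, ∀ φ ∈ Φ, (x - pΨ x) ⬝ᵥ φ = 0 := by
    intro x φ hφ
    have h := (hpΨ x).2 (A⁻¹.mulVec φ) ⟨φ, hφ, rfl⟩
    rwa [hAinv φ] at h
  -- the two key estimates, for every x
  have key : ∀ x : Fin n → ℝ, normA A (x - pΨ x) ≤ ε * norm2 (A.mulVec x) ∧
      norm2 (x - pΨ x) ≤ ε ^ 2 * norm2 (A.mulVec x) := by
    intro x
    set e := x - pΨ x with he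
    set b := A.mulVec x with hb
    -- ‖e‖_A² = e ⬝ᵥ b
    have h0 : e ⬝ᵥ A.mulVec (pΨ x) = 0 := (hpΨ x).2 _ (hpΨ x).1
    have hEA : normA A e ^ 2 = e ⬝ᵥ b := by
      rw [hnormA_sq, he, Matrix.mulVec_sub, dotProduct_sub, ← he, h0, sub_zero]
    -- ‖e‖₂ ≤ ε ‖e‖_A
    have h1 : e ⬝ᵥ pΦ e = 0 := heperp x (pΦ e) (hpΦ e).1
    have h2 : norm2 e ^ 2 ≤ norm2 e * (ε * normA A e) := by
      calc norm2 e ^ 2 = e ⬝ᵥ e := hnorm2_sq e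
        _ = e ⬝ᵥ (e - pΦ e) := by
            rw [dotProduct_sub e e (pΦ e), h1, sub_zero]
        _ ≤ norm2 e * norm2 (e - pΦ e) := hCS _ _
        _ ≤ norm2 e * (ε * normA A e) :=
            mul_le_mul_of_nonneg_left (happrox e) (hnorm2_nonneg e)
    have h3 : norm2 e ≤ ε * normA A e := by
      rcases eq_or_lt_of_le (hnorm2_nonneg e) with h | h
      · rw [← h]; exact mul_nonneg hε.le (hnormA_nonneg e)
      · have := h2
        rw [sq] at this
        exact le_of_mul_le_mul_left this h
    -- ‖e‖_A ≤ ε ‖b‖₂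
    have h4 : normA A e ≤ ε * norm2 b := by
      rcases eq_or_lt_of_le (hnormA_nonneg e) with h | h
      · rw [← h]; exact mul_nonneg hε.le (hnorm2_nonneg b)
      · have h5 : normA A e ^ 2 ≤ (ε * norm2 b) * normA A e := by
          calc normA A e ^ 2 = e ⬝ᵥ b := hEA
            _ ≤ norm2 e * norm2 b := hCS _ _
            _ ≤ (ε * normA A e) * norm2 b :=
                mul_le_mul_of_nonneg_right h3 (hnorm2_nonneg b)
            _ = (ε * norm2 b) * normA A e := by ring
        rw [sq] at h5
        exact le_of_mul_le_mul_right h5 h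
    refine ⟨h4, ?_⟩
    calc norm2 e ≤ ε * normA A e := h3
      _ ≤ ε * (ε * norm2 b) := mul_le_mul_of_nonneg_left h4 hε.le
      _ = ε ^ 2 * norm2 b := by ring
  refine ⟨fun x => (key x).1, fun x => (key x).2, fun b => ?_⟩
  have := (key (A⁻¹.mulVec b)).2
  rwa [hAinv b] at this
end
end

section
/- Let A be an n×n real symmetric positive definite matrix with energy decomposition ℰ = {E_k}_{k=1}^m and let 𝒫 = {P_j}_{j=1}^M be a partition of {1,…,n}. For each j, let Φ_j be a subspace of the coordinate subspace span{e_i : i ∈ P_j}, and suppose ‖x − P_{Φ_j} x‖₂ ≤ ε √(xᵀ underline(A)_{P_j} x) for all x ∈ span{e_i : i ∈ P_j}, for some ε > 0, where P_{Φ_j} is the Euclidean orthogonal projection onto Φ_j. Then, with Φ = ⊕_{j=1}^M Φ_j and P_Φ the Euclidean orthogonal projection onto Φ, one has ‖x − P_Φ x‖₂ ≤ ε‖x‖_A for all x ∈ ℝⁿ. -/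
open Matrix BigOperators
open scoped Classical

noncomputable section

/-- The coordinate subspace `span{e_i : i ∈ S}` of `ℝⁿ`: vectors vanishing outside `S`. -/
def coordSubspace {n : ℕ} (S : Finset (Fin n)) : Submodule ℝ (Fin n → ℝ) where
  carrier := {x | ∀ i, i ∉ S → x i = 0}
  add_mem' := by
    intro a b ha hb i hi
    simp only [Pi.add_apply, ha i hi, hb i hi, add_zero]
  zero_mem' := by intro i _; rfl
  smul_mem' := by
    intro c x hx i hi
    simp [hx i hi]

/-! Put `y = ∑ⱼ P_{Φⱼ} (x|_{Pⱼ}) ∈ Φ`. Since `P_Φ x` is the best Euclidean approximation of `x`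
in `Φ`, `‖x - P_Φ x‖₂ ≤ ‖x - y‖₂`, and `x - y = ∑ⱼ (x|_{Pⱼ} - P_{Φⱼ} x|_{Pⱼ})` is a sum of
vectors with disjoint supports, so its squared norm is the sum of the local squared errors, each
at most `ε² x|_{Pⱼ}ᵀ underline(A)_{Pⱼ} x|_{Pⱼ} = ε² ∑_{Eₖ interior to Pⱼ} xᵀ Eₖ x`. A nonzero
`Eₖ` is interior to at most one patch, so these sum to at most `ε² xᵀ A x`. -/

section DotProduct

variable {ι : Type*} [Fintype ι]

theorem dotProduct_sub_self_le_of_orthogonal {W : Submodule ℝ (ι → ℝ)} {x p y : ι → ℝ}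
    (hp : p ∈ W) (horth : ∀ w ∈ W, (x - p) ⬝ᵥ w = 0) (hy : y ∈ W) :
    (x - p) ⬝ᵥ (x - p) ≤ (x - y) ⬝ᵥ (x - y) := by
  have hpy : (x - p) ⬝ᵥ (p - y) = 0 := horth _ (W.sub_mem hp hy)
  have hsplit : x - y = (x - p) + (p - y) := by abel
  rw [hsplit, add_dotProduct, dotProduct_add, dotProduct_add, hpy, dotProduct_comm (p - y), hpy]
  have hnonneg : 0 ≤ (p - y) ⬝ᵥ (p - y) := by simpa using dotProduct_self_star_nonneg (p - y)
  linarith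

theorem dotProduct_sum_self_of_pairwise_orthogonal {R κ : Type*} [NonUnitalNonAssocSemiring R]
    (s : Finset κ) (v : κ → ι → R) (horth : ∀ i ∈ s, ∀ j ∈ s, i ≠ j → v i ⬝ᵥ v j = 0) :
    (∑ i ∈ s, v i) ⬝ᵥ (∑ i ∈ s, v i) = ∑ i ∈ s, v i ⬝ᵥ v i := by
  rw [sum_dotProduct]
  refine Finset.sum_congr rfl fun i hi => ?_
  rw [dotProduct_sum]
  exact Finset.sum_eq_single_of_mem i hi fun j hj hji => horth i hi j hj hji.symm

end DotProduct

theorem norm2_sq {ι : Type} [Fintype ι] (v : ι → ℝ) : norm2 v ^ 2 = v ⬝ᵥ v :=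
  Real.sq_sqrt (by simpa using dotProduct_self_star_nonneg v)

theorem norm2_le_mul_sqrt {ι : Type} [Fintype ι] {v : ι → ℝ} {ε q : ℝ} (hε : 0 ≤ ε)
    (h : v ⬝ᵥ v ≤ ε ^ 2 * q) : norm2 v ≤ ε * Real.sqrt q := by
  calc norm2 v ≤ Real.sqrt (ε ^ 2 * q) := Real.sqrt_le_sqrt h
    _ = ε * Real.sqrt q := by rw [Real.sqrt_mul (sq_nonneg ε), Real.sqrt_sq hε]

theorem dotProduct_self_le_of_norm2_le_mul_sqrt {ι : Type} [Fintype ι] {v : ι → ℝ} {ε q : ℝ}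
    (hq : 0 ≤ q) (h : norm2 v ≤ ε * Real.sqrt q) : v ⬝ᵥ v ≤ ε ^ 2 * q := by
  have := pow_le_pow_left₀ (Real.sqrt_nonneg _) h 2
  rwa [← norm2, norm2_sq, mul_pow, Real.sq_sqrt hq] at this

section Coordinates

variable {n : ℕ}

theorem projSet_mulVec_apply (S : Finset (Fin n)) (x : Fin n → ℝ) (i : Fin n) :
    (projSet S *ᵥ x) i = if i ∈ S then x i else 0 := by
  simp [projSet, mulVec_diagonal, ite_mul]

theorem projSet_mulVec_mem (S : Finset (Fin n)) (x : Fin n → ℝ) :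
    projSet S *ᵥ x ∈ coordSubspace S := fun i hi => by
  rw [projSet_mulVec_apply, if_neg hi]

theorem dotProduct_projSet_mulVec (S : Finset (Fin n)) (x w : Fin n → ℝ) :
    x ⬝ᵥ (projSet S *ᵥ w) = (projSet S *ᵥ x) ⬝ᵥ w := by
  simp only [dotProduct, projSet_mulVec_apply]
  refine Finset.sum_congr rfl fun i _ => ?_
  split_ifs <;> simp

theorem projSet_mul_projSet (S T : Finset (Fin n)) :
    projSet S * projSet T = projSet (S ∩ T) := by
  simp only [projSet, diagonal_mul_diagonal, Finset.mem_inter]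
  congr 1
  ext i
  split_ifs <;> simp_all

theorem projSet_empty : projSet (∅ : Finset (Fin n)) = 0 := by
  simp [projSet]

theorem sum_projSet_mulVec {M : ℕ} {P : Fin M → Finset (Fin n)}
    (hdisj : ∀ j j', j ≠ j' → Disjoint (P j) (P j')) (hcover : Finset.univ.biUnion P = .univ)
    (x : Fin n → ℝ) : ∑ j, projSet (P j) *ᵥ x = x := by
  ext i
  obtain ⟨j, -, hij⟩ := Finset.mem_biUnion.mp (hcover ▸ Finset.mem_univ i)
  rw [Finset.sum_apply, Finset.sum_eq_single j, projSet_mulVec_apply, if_pos hij]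
  · intro j' _ hj'
    rw [projSet_mulVec_apply, if_neg (Finset.disjoint_right.mp (hdisj j' j hj') hij)]
  · simp

theorem dotProduct_eq_zero_of_disjoint {S T : Finset (Fin n)} (hST : Disjoint S T)
    {u v : Fin n → ℝ} (hu : u ∈ coordSubspace S) (hv : v ∈ coordSubspace T) : u ⬝ᵥ v = 0 := by
  refine Finset.sum_eq_zero fun i _ => ?_
  by_cases hi : i ∈ S
  · rw [hv i (Finset.disjoint_left.mp hST hi), mul_zero]
  · rw [hu i hi, zero_mul]

end Coordinates

section InteriorEnergy

variable {n : ℕ}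

theorem InteriorTo.dotProduct_mulVec_projSet {F : Matrix (Fin n) (Fin n) ℝ} {S : Finset (Fin n)}
    (h : InteriorTo F S) (x : Fin n → ℝ) :
    (projSet S *ᵥ x) ⬝ᵥ (F *ᵥ (projSet S *ᵥ x)) = x ⬝ᵥ (F *ᵥ x) := by
  conv_rhs => rw [← h]
  rw [← mulVec_mulVec, ← mulVec_mulVec, dotProduct_projSet_mulVec]

theorem InteriorTo.eq_zero_of_disjoint {F : Matrix (Fin n) (Fin n) ℝ} {S T : Finset (Fin n)}
    (hS : InteriorTo F S) (hT : InteriorTo F T) (hST : Disjoint S T) : F = 0 := by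
  calc F = projSet S * (projSet T * F * projSet T) * projSet S := by rw [hT, hS]
    _ = projSet (S ∩ T) * F * projSet (T ∩ S) := by
        simp only [← projSet_mul_projSet, Matrix.mul_assoc]
    _ = 0 := by
        rw [Finset.disjoint_iff_inter_eq_empty.mp hST, projSet_empty, Matrix.zero_mul,
          Matrix.zero_mul]

theorem card_filter_interiorTo_le_one {M : ℕ} {F : Matrix (Fin n) (Fin n) ℝ} (hF : F ≠ 0)
    {P : Fin M → Finset (Fin n)} (hdisj : ∀ j j', j ≠ j' → Disjoint (P j) (P j')) :
    (Finset.univ.filter fun j => InteriorTo F (P j)).card ≤ 1 := by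
  refine Finset.card_le_one.mpr fun a ha b hb => ?_
  by_contra hab
  exact hF ((Finset.mem_filter.mp ha).2.eq_zero_of_disjoint (Finset.mem_filter.mp hb).2
    (hdisj a b hab))

theorem sum_ite_interiorTo_le {M : ℕ} {F : Matrix (Fin n) (Fin n) ℝ} (hF : F.PosSemidef)
    {P : Fin M → Finset (Fin n)} (hdisj : ∀ j j', j ≠ j' → Disjoint (P j) (P j'))
    (x : Fin n → ℝ) :
    ∑ j, (if InteriorTo F (P j) then x ⬝ᵥ (F *ᵥ x) else 0) ≤ x ⬝ᵥ (F *ᵥ x) := by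
  rcases eq_or_ne F 0 with rfl | hF0
  · simp
  rw [← Finset.sum_filter, Finset.sum_const, nsmul_eq_mul]
  exact mul_le_of_le_one_left (by simpa using hF.dotProduct_mulVec_nonneg x)
    (by exact_mod_cast card_filter_interiorTo_le_one hF0 hdisj)

variable {m : ℕ} (E : Fin m → Matrix (Fin n) (Fin n) ℝ)

theorem dotProduct_interiorEnergy_mulVec_projSet (S : Finset (Fin n)) (x : Fin n → ℝ) :
    (projSet S *ᵥ x) ⬝ᵥ (interiorEnergy E S *ᵥ (projSet S *ᵥ x)) =
      ∑ k, if InteriorTo (E k) S then x ⬝ᵥ (E k *ᵥ x) else 0 := by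
  rw [interiorEnergy, sum_mulVec, dotProduct_sum]
  refine Finset.sum_congr rfl fun k _ => ?_
  split_ifs with h
  · exact h.dotProduct_mulVec_projSet x
  · simp

theorem dotProduct_interiorEnergy_mulVec_nonneg (hE : ∀ k, (E k).PosSemidef)
    (S : Finset (Fin n)) (x : Fin n → ℝ) : 0 ≤ x ⬝ᵥ (interiorEnergy E S *ᵥ x) := by
  rw [interiorEnergy, sum_mulVec, dotProduct_sum]
  refine Finset.sum_nonneg fun k _ => ?_
  split_ifs
  · simpa using (hE k).dotProduct_mulVec_nonneg x
  · simp

theorem sum_dotProduct_interiorEnergy_le (hE : ∀ k, (E k).PosSemidef) {M : ℕ}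
    {P : Fin M → Finset (Fin n)} (hdisj : ∀ j j', j ≠ j' → Disjoint (P j) (P j'))
    (x : Fin n → ℝ) :
    ∑ j, (projSet (P j) *ᵥ x) ⬝ᵥ (interiorEnergy E (P j) *ᵥ (projSet (P j) *ᵥ x)) ≤
      x ⬝ᵥ ((∑ k, E k) *ᵥ x) := by
  simp only [dotProduct_interiorEnergy_mulVec_projSet]
  rw [Finset.sum_comm, sum_mulVec, dotProduct_sum]
  exact Finset.sum_le_sum fun k _ => sum_ite_interiorTo_le (hE k) hdisj x

end InteriorEnergy

theorem global_accuracy_of_local_accuracy_general {n m M : ℕ}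
    (A : Matrix (Fin n) (Fin n) ℝ)
    (E : Fin m → Matrix (Fin n) (Fin n) ℝ) (hE : ∀ k, (E k).PosSemidef)
    (hsum : A = ∑ k, E k)
    (P : Fin M → Finset (Fin n)) (hP : IsPartition P)
    (Φj : Fin M → Submodule ℝ (Fin n → ℝ)) (hΦj : ∀ j, Φj j ≤ coordSubspace (P j))
    (pΦj : Fin M → (Fin n → ℝ) → (Fin n → ℝ))
    (hpΦj : ∀ j x, pΦj j x ∈ Φj j ∧ ∀ y ∈ Φj j, (x - pΦj j x) ⬝ᵥ y = 0)
    (ε : ℝ) (hε : 0 < ε)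
    (hlocal : ∀ j, ∀ x ∈ coordSubspace (P j),
      norm2 (x - pΦj j x) ≤ ε * Real.sqrt (x ⬝ᵥ (interiorEnergy E (P j)).mulVec x))
    (pΦ : (Fin n → ℝ) → (Fin n → ℝ))
    (hpΦ : ∀ x, pΦ x ∈ (⨆ j, Φj j) ∧ ∀ y ∈ (⨆ j, Φj j), (x - pΦ x) ⬝ᵥ y = 0) :
    ∀ x : Fin n → ℝ, norm2 (x - pΦ x) ≤ ε * normA A x := by
  intro x
  obtain ⟨-, hdisj, hcover⟩ := hP
  set xj : Fin M → Fin n → ℝ := fun j => projSet (P j) *ᵥ x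
  set err : Fin M → Fin n → ℝ := fun j => xj j - pΦj j (xj j)
  have hy : ∑ j, pΦj j (xj j) ∈ ⨆ j, Φj j :=
    Submodule.sum_mem _ fun j _ => Submodule.mem_iSup_of_mem j (hpΦj j _).1
  have hxy : x - ∑ j, pΦj j (xj j) = ∑ j, err j := by
    rw [Finset.sum_sub_distrib, sum_projSet_mulVec hdisj hcover]
  have herr_mem : ∀ j, err j ∈ coordSubspace (P j) :=
    fun j => Submodule.sub_mem _ (projSet_mulVec_mem _ x) (hΦj j (hpΦj j _).1)
  have herr_le : ∀ j, err j ⬝ᵥ err j ≤ ε ^ 2 * (xj j ⬝ᵥ (interiorEnergy E (P j) *ᵥ xj j)) :=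
    fun j => dotProduct_self_le_of_norm2_le_mul_sqrt
      (dotProduct_interiorEnergy_mulVec_nonneg E hE _ _) (hlocal j _ (projSet_mulVec_mem _ x))
  refine norm2_le_mul_sqrt hε.le ?_
  calc (x - pΦ x) ⬝ᵥ (x - pΦ x)
      ≤ (x - ∑ j, pΦj j (xj j)) ⬝ᵥ (x - ∑ j, pΦj j (xj j)) :=
        dotProduct_sub_self_le_of_orthogonal (hpΦ x).1 (hpΦ x).2 hy
    _ = ∑ j, err j ⬝ᵥ err j := by
        rw [hxy, dotProduct_sum_self_of_pairwise_orthogonal]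
        exact fun j _ j' _ hjj' => dotProduct_eq_zero_of_disjoint (hdisj j j' hjj')
          (herr_mem j) (herr_mem j')
    _ ≤ ε ^ 2 * ∑ j, xj j ⬝ᵥ (interiorEnergy E (P j) *ᵥ xj j) := by
        rw [Finset.mul_sum]
        exact Finset.sum_le_sum fun j _ => herr_le j
    _ ≤ ε ^ 2 * (x ⬝ᵥ (A *ᵥ x)) := by
        rw [hsum]
        gcongr
        exact sum_dotProduct_interiorEnergy_le E hE hdisj x

/-- Local-to-global accuracy: if on every patch `P_j` the local space
`Φ_j ⊆ span{e_i : i ∈ P_j}` satisfies `‖x − P_{Φ_j} x‖₂ ≤ ε √(xᵀ underline(A)_{P_j} x)`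
for all `x ∈ span{e_i : i ∈ P_j}`, then with `Φ = ⊕_j Φ_j`,
`‖x − P_Φ x‖₂ ≤ ε ‖x‖_A` for all `x ∈ ℝⁿ`. -/
theorem global_accuracy_of_local_accuracy {n m M : ℕ}
    (A : Matrix (Fin n) (Fin n) ℝ) (hA : A.PosDef)
    (E : Fin m → Matrix (Fin n) (Fin n) ℝ) (hE : ∀ k, (E k).PosSemidef)
    (hsum : A = ∑ k, E k)
    (P : Fin M → Finset (Fin n)) (hP : IsPartition P)
    (Φj : Fin M → Submodule ℝ (Fin n → ℝ)) (hΦj : ∀ j, Φj j ≤ coordSubspace (P j))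
    (pΦj : Fin M → (Fin n → ℝ) → (Fin n → ℝ))
    (hpΦj : ∀ j x, pΦj j x ∈ Φj j ∧ ∀ y ∈ Φj j, (x - pΦj j x) ⬝ᵥ y = 0)
    (ε : ℝ) (hε : 0 < ε)
    (hlocal : ∀ j, ∀ x ∈ coordSubspace (P j),
      norm2 (x - pΦj j x) ≤ ε * Real.sqrt (x ⬝ᵥ (interiorEnergy E (P j)).mulVec x))
    (pΦ : (Fin n → ℝ) → (Fin n → ℝ))
    (hpΦ : ∀ x, pΦ x ∈ (⨆ j, Φj j) ∧ ∀ y ∈ (⨆ j, Φj j), (x - pΦ x) ⬝ᵥ y = 0) :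
    ∀ x : Fin n → ℝ, norm2 (x - pΦ x) ≤ ε * normA A x :=
  global_accuracy_of_local_accuracy_general A E hE hsum P hP Φj hΦj pΦj hpΦj ε hε hlocal pΦ hpΦ
end
end

section
/- Let M be an s×s real symmetric positive semidefinite matrix with eigenvalues λ_1 ≤ λ_2 ≤ ⋯ ≤ λ_s listed with multiplicity, and let ε > 0. Then the minimum of dim Θ over all subspaces Θ ⊆ ℝ^s satisfying ‖x − P_Θ x‖₂ ≤ ε √(xᵀM x) for all x ∈ ℝ^s equals the number of indices i ∈ {1,…,s} with λ_i < ε⁻²; equivalently, it equals the smallest integer q such that either q = s or λ_{q+1} ≥ ε⁻². -/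
open Matrix BigOperators

noncomputable section

/-!
In an orthonormal eigenbasis of `M` the requirement on `Θ` reads
`‖x - y‖² ≤ ε² ∑ⱼ λⱼ xⱼ²`. The span of the eigenvectors with `λⱼ < ε⁻²` meets it: the orthogonal
projection onto it only discards coordinates with `1 ≤ ε² λⱼ`. Conversely, if `dim Θ` is smaller
than the dimension of that span, the span contains a nonzero `x ⊥ Θ`; every point of `Θ` is at
distance at least `‖x‖` from `x`, whereas `ε² xᵀMx < ‖x‖²`.
-/

open Module Submodule Set

namespace OrthonormalBasis

section

variable {ι 𝕜 E : Type*} [Fintype ι] [RCLike 𝕜] [NormedAddCommGroup E] [InnerProductSpace 𝕜 E]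

theorem repr_eq_zero_of_mem_span (b : OrthonormalBasis ι 𝕜 E) {p : ι → Prop} {v : E}
    (hv : v ∈ span 𝕜 (range fun i : Subtype p => b i)) {j : ι} (hj : ¬ p j) : b.repr v j = 0 := by
  have hspan : span 𝕜 (range fun i : Subtype p => b i) ≤ (𝕜 ∙ b j)ᗮ := by
    rw [span_le]
    rintro _ ⟨⟨i, hi⟩, rfl⟩
    exact mem_orthogonal_singleton_iff_inner_right.mpr
      (b.orthonormal.inner_eq_zero fun hji => hj (hji ▸ hi))
  rw [b.repr_apply_apply]
  exact mem_orthogonal_singleton_iff_inner_right.mp (hspan hv)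

theorem exists_mem_span_repr_sub_eq_zero (b : OrthonormalBasis ι 𝕜 E) (p : ι → Prop) (x : E) :
    ∃ y ∈ span 𝕜 (range fun i : Subtype p => b i), ∀ j, p j → b.repr (x - y) j = 0 := by
  have := Module.Finite.of_basis b.toBasis
  set V := span 𝕜 (range fun i : Subtype p => b i)
  refine ⟨V.starProjection x, V.starProjection_apply_mem x, fun j hj => ?_⟩
  rw [b.repr_apply_apply]
  exact V.inner_right_of_mem_orthogonal (subset_span ⟨⟨j, hj⟩, rfl⟩)
    (V.sub_starProjection_mem_orthogonal x)

end

section Real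

variable {ι E : Type*} [Fintype ι] [NormedAddCommGroup E] [InnerProductSpace ℝ E]
  (b : OrthonormalBasis ι ℝ E) {μ : ι → ℝ}

theorem norm_sq_eq_sum_repr_sq (x : E) : ‖x‖ ^ 2 = ∑ i, b.repr x i ^ 2 := by
  rw [← b.repr.norm_map, EuclideanSpace.real_norm_sq_eq]

theorem exists_mem_span_mul_norm_sub_sq_le (hμ : ∀ i, 0 ≤ μ i) (c : ℝ) (x : E) :
    ∃ y ∈ span ℝ (range fun i : {i // μ i < c} => b i),
      c * ‖x - y‖ ^ 2 ≤ ∑ i, μ i * b.repr x i ^ 2 := by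
  obtain ⟨y, hyV, hxy⟩ := b.exists_mem_span_repr_sub_eq_zero (fun i => μ i < c) x
  refine ⟨y, hyV, ?_⟩
  rw [b.norm_sq_eq_sum_repr_sq, Finset.mul_sum]
  refine Finset.sum_le_sum fun j _ => ?_
  by_cases hj : μ j < c
  · rw [hxy j hj]
    simpa using mul_nonneg (hμ j) (sq_nonneg (b.repr x j))
  · rw [map_sub, PiLp.sub_apply, b.repr_eq_zero_of_mem_span hyV hj, sub_zero]
    exact mul_le_mul_of_nonneg_right (not_lt.mp hj) (sq_nonneg _)

theorem sum_mul_repr_sq_lt_mul_norm_sq {c : ℝ} {v : E}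
    (hv : v ∈ span ℝ (range fun i : {i // μ i < c} => b i)) (hv0 : v ≠ 0) :
    ∑ i, μ i * b.repr v i ^ 2 < c * ‖v‖ ^ 2 := by
  obtain ⟨j, hj⟩ : ∃ j, b.repr v j ≠ 0 := by
    by_contra! h
    exact hv0 (b.repr.injective (by ext i; simpa using h i))
  have hμc : ∀ i, b.repr v i ≠ 0 → μ i < c := fun i hi => by
    by_contra h
    exact hi (b.repr_eq_zero_of_mem_span hv h)
  rw [b.norm_sq_eq_sum_repr_sq, Finset.mul_sum]
  refine Finset.sum_lt_sum (fun i _ => ?_) ⟨j, Finset.mem_univ j, ?_⟩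
  · by_cases hi : b.repr v i = 0
    · simp [hi]
    · exact mul_le_mul_of_nonneg_right (hμc i hi).le (sq_nonneg _)
  · exact mul_lt_mul_of_pos_right (hμc j hj) (sq_pos_of_ne_zero hj)

end Real

end OrthonormalBasis

theorem Submodule.exists_ne_zero_forall_norm_le_norm_sub {E : Type*} [NormedAddCommGroup E]
    [InnerProductSpace ℝ E] [FiniteDimensional ℝ E] (V W : Submodule ℝ E)
    (h : finrank ℝ W < finrank ℝ V) : ∃ x ∈ V, x ≠ 0 ∧ ∀ y ∈ W, ‖x‖ ≤ ‖x - y‖ := by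
  obtain ⟨⟨x, hxV⟩, hker, hx0⟩ := exists_mem_ne_zero_of_ne_bot
    (LinearMap.ker_ne_bot_of_finrank_lt
      (f := (W.orthogonalProjectionOnto : E →ₗ[ℝ] W) ∘ₗ V.subtype) h)
  have hxW : x ∈ Wᗮ := orthogonalProjectionOnto_eq_zero_iff.mp hker
  refine ⟨x, hxV, fun h => hx0 (by simp [h]), fun y hy => ?_⟩
  have hpyth := norm_sub_sq_eq_norm_sq_add_norm_sq_real (W.inner_left_of_mem_orthogonal hy hxW)
  nlinarith [norm_nonneg (x - y), norm_nonneg x, mul_self_nonneg ‖y‖]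

namespace Matrix.IsHermitian

variable {ι : Type*} [Fintype ι] [DecidableEq ι] {A : Matrix ι ι ℝ} (hA : A.IsHermitian)

theorem eigenvectorBasis_repr_mulVec (x : EuclideanSpace ℝ ι) (i : ι) :
    hA.eigenvectorBasis.repr (WithLp.toLp 2 (A *ᵥ x.ofLp)) i =
      hA.eigenvalues i * hA.eigenvectorBasis.repr x i := by
  have hT := isSymmetric_toEuclideanLin_iff.mpr hA
  have heig : toEuclideanLin A (hA.eigenvectorBasis i) =
      hA.eigenvalues i • hA.eigenvectorBasis i := by
    apply WithLp.ofLp_injective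
    simpa using hA.mulVec_eigenvectorBasis i
  rw [OrthonormalBasis.repr_apply_apply, OrthonormalBasis.repr_apply_apply, ← toLpLin_apply,
    ← hT, heig, real_inner_smul_left]

theorem dotProduct_mulVec_eq_sum (x : EuclideanSpace ℝ ι) :
    x.ofLp ⬝ᵥ A *ᵥ x.ofLp = ∑ i, hA.eigenvalues i * hA.eigenvectorBasis.repr x i ^ 2 := by
  have hinner : x.ofLp ⬝ᵥ A *ᵥ x.ofLp = inner ℝ x (WithLp.toLp 2 (A *ᵥ x.ofLp)) := by
    simp [EuclideanSpace.inner_eq_star_dotProduct, dotProduct_comm]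
  rw [hinner, ← hA.eigenvectorBasis.repr.inner_map_map, PiLp.inner_apply]
  refine Finset.sum_congr rfl fun i _ => ?_
  rw [eigenvectorBasis_repr_mulVec]
  simp only [RCLike.inner_apply, conj_trivial]
  ring

def eigenspanLT (c : ℝ) : Submodule ℝ (EuclideanSpace ℝ ι) :=
  span ℝ (range fun i : {i // hA.eigenvalues i < c} => hA.eigenvectorBasis i)

theorem finrank_eigenspanLT (c : ℝ) :
    finrank ℝ (hA.eigenspanLT c) = (Finset.univ.filter fun i => hA.eigenvalues i < c).card :=
  (finrank_span_eq_card
    (hA.eigenvectorBasis.orthonormal.linearIndependent.comp _ Subtype.val_injective)).trans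
    (Fintype.card_subtype _)

theorem mul_sqrt_lt_norm_of_mem_eigenspanLT {ε : ℝ} (hε : 0 < ε) {v : EuclideanSpace ℝ ι}
    (hv : v ∈ hA.eigenspanLT (ε⁻¹ ^ 2)) (hv0 : v ≠ 0) :
    ε * √(v.ofLp ⬝ᵥ A *ᵥ v.ofLp) < ‖v‖ := by
  have hlt := hA.eigenvectorBasis.sum_mul_repr_sq_lt_mul_norm_sq hv hv0
  rw [← hA.dotProduct_mulVec_eq_sum] at hlt
  rw [← lt_div_iff₀' hε, Real.sqrt_lt' (by positivity), div_pow, div_eq_inv_mul, ← inv_pow]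
  exact hlt

end Matrix.IsHermitian

theorem Matrix.PosSemidef.exists_mem_eigenspanLT_norm_sub_le {ι : Type*} [Fintype ι]
    [DecidableEq ι] {A : Matrix ι ι ℝ} (hA : A.PosSemidef) {ε : ℝ} (hε : 0 < ε)
    (x : EuclideanSpace ℝ ι) :
    ∃ y ∈ hA.isHermitian.eigenspanLT (ε⁻¹ ^ 2), ‖x - y‖ ≤ ε * √(x.ofLp ⬝ᵥ A *ᵥ x.ofLp) := by
  obtain ⟨y, hyV, hle⟩ :=
    hA.isHermitian.eigenvectorBasis.exists_mem_span_mul_norm_sub_sq_le hA.eigenvalues_nonneg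
      (ε⁻¹ ^ 2) x
  refine ⟨y, hyV, ?_⟩
  rw [← hA.isHermitian.dotProduct_mulVec_eq_sum] at hle
  rw [← div_le_iff₀' hε]
  exact Real.le_sqrt_of_sq_le (by rwa [div_pow, div_eq_inv_mul, ← inv_pow])

theorem norm2_eq_norm {ι : Type} [Fintype ι] (x : ι → ℝ) : norm2 x = ‖WithLp.toLp 2 x‖ := by
  rw [norm2, EuclideanSpace.norm_eq]
  simp [dotProduct, sq]

/-- For an `s × s` real symmetric positive semidefinite matrix `M` and
`ε > 0`, the minimum of `dim Θ` over all subspaces `Θ ⊆ ℝˢ` with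
`‖x − P_Θ x‖₂ ≤ ε √(xᵀ M x)` for all `x` equals the number of eigenvalues of `M`
(counted with multiplicity) that are `< ε⁻²`.  (Since `P_Θ x` is the closest point of `Θ`
to `x`, the defining property of `Θ` is phrased as: for every `x` there is `y ∈ Θ` with
`‖x − y‖₂ ≤ ε √(xᵀ M x)`.) -/
theorem minimal_dimension_eq_eigenvalue_count {s : ℕ}
    (M : Matrix (Fin s) (Fin s) ℝ) (hM : M.PosSemidef) (ε : ℝ) (hε : 0 < ε) :
    IsLeast {d : ℕ | ∃ Θ : Submodule ℝ (Fin s → ℝ),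
        (∀ x : Fin s → ℝ, ∃ y ∈ Θ,
          norm2 (x - y) ≤ ε * Real.sqrt (x ⬝ᵥ M.mulVec x)) ∧
        Module.finrank ℝ Θ = d}
      (Finset.univ.filter fun i => hM.isHermitian.eigenvalues i < ε⁻¹ ^ 2).card := by
  set e := WithLp.linearEquiv 2 ℝ (Fin s → ℝ)
  set V := hM.isHermitian.eigenspanLT (ε⁻¹ ^ 2)
  refine ⟨⟨V.map e.toLinearMap, fun x => ?_, ?_⟩, ?_⟩
  · obtain ⟨y, hyV, hxy⟩ := hM.exists_mem_eigenspanLT_norm_sub_le hε (WithLp.toLp 2 x)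
    exact ⟨y.ofLp, mem_map_of_mem hyV, by rwa [norm2_eq_norm]⟩
  · rw [e.finrank_map_eq V]
    exact hM.isHermitian.finrank_eigenspanLT _
  rintro d ⟨Θ, hΘ, rfl⟩
  by_contra! hlt
  have hrank : finrank ℝ (Θ.comap e.toLinearMap) < finrank ℝ V := by
    rw [comap_equiv_eq_map_symm, LinearEquiv.finrank_map_eq, hM.isHermitian.finrank_eigenspanLT]
    exact hlt
  obtain ⟨x, hxV, hx0, hfar⟩ := exists_ne_zero_forall_norm_le_norm_sub V _ hrank
  obtain ⟨y, hyΘ, hxy⟩ := hΘ x.ofLp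
  rw [norm2_eq_norm] at hxy
  exact (hM.isHermitian.mul_sqrt_lt_norm_of_mem_eigenspanLT hε hxV hx0).not_ge
    ((hfar (WithLp.toLp 2 y) hyΘ).trans hxy)
end
end

section
/- Let A be an n×n real symmetric positive definite matrix, and let Ψ = [ψ_1,…,ψ_N] be an n×N real matrix with linearly independent columns such that A_st = ΨᵀAΨ satisfies ‖A_st⁻¹‖₂ ≤ ‖A⁻¹‖₂ and such that ‖x − P^A_Ψ x‖_A ≤ ε‖Ax‖₂ for all x ∈ ℝⁿ, for some ε > 0. Let Ψ̃ = [ψ̃_1,…,ψ̃_N] be an n×N matrix with ‖ψ_i − ψ̃_i‖_A ≤ Cε/√N for all 1 ≤ i ≤ N, for some constant C ≥ 0. Then: (1) for every x ∈ ℝⁿ with b = Ax, ‖x − P^A_{Ψ̃} x‖_A ≤ (1 + C‖A⁻¹‖₂) ε ‖b‖₂; (2) for every x ∈ ℝⁿ with b = Ax, ‖x − P^A_{Ψ̃} x‖₂ ≤ (1 + C‖A⁻¹‖₂)² ε² ‖b‖₂; (3) ‖A⁻¹ − P^A_{Ψ̃} A⁻¹‖₂ ≤ (1 + C‖A⁻¹‖₂)²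 ε². -/
open Matrix BigOperators

noncomputable section

/-! Let `P^A_Ψ x = Ψ c`. Since `P^A_{Ψ̃}` is the `A`-best approximation from `span Ψ̃`,
`‖x - P^A_{Ψ̃} x‖_A ≤ ‖x - P^A_Ψ x‖_A + ‖(Ψ - Ψ̃) c‖_A ≤ ε ‖b‖₂ + C ε ‖c‖₂`, the last step by the
triangle inequality over the columns and `‖c‖₁ ≤ √N ‖c‖₂`. The coefficients are controlled by
`‖c‖₂² ≤ ‖A_st⁻¹‖₂ ‖Ψ c‖_A² ≤ ‖A⁻¹‖₂ ‖x‖_A² ≤ ‖A⁻¹‖₂² ‖b‖₂²`. The Euclidean bound is the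
Aubin–Nitsche duality argument: for the error `e` and `A z = e`,
`‖e‖₂² = ⟨e, z - P^A_{Ψ̃} z⟩_A ≤ ‖e‖_A ‖z - P^A_{Ψ̃} z‖_A`, and both factors are bounded by the
energy estimate. The last claim is the Euclidean bound at `x = A⁻¹ b`. -/

lemma le_of_mul_self_le_mul_right {α : Type*} [CommRing α] [LinearOrder α] [IsStrictOrderedRing α]
    {a b : α} (hb : 0 ≤ b) (h : a * a ≤ b * a) : a ≤ b := by
  nlinarith

section

variable {ι κ : Type} [Fintype ι] [Fintype κ]

lemma norm2_eq_norm_toLp (v : ι → ℝ) : norm2 v = ‖WithLp.toLp 2 v‖ := by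
  rw [norm_eq_sqrt_real_inner, EuclideanSpace.inner_toLp_toLp, star_trivial, norm2]

lemma norm2_nonneg (v : ι → ℝ) : 0 ≤ norm2 v := Real.sqrt_nonneg _

lemma norm2_mul_self (v : ι → ℝ) : norm2 v * norm2 v = v ⬝ᵥ v := by
  rw [norm2_eq_norm_toLp, ← real_inner_self_eq_norm_mul_norm, EuclideanSpace.inner_toLp_toLp,
    star_trivial]

lemma specNorm_nonneg [DecidableEq ι] (M : Matrix ι ι ℝ) : 0 ≤ specNorm M := norm_nonneg _

lemma dotProduct_le_norm2_mul_norm2 (u v : ι → ℝ) : u ⬝ᵥ v ≤ norm2 u * norm2 v := by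
  rw [norm2_eq_norm_toLp, norm2_eq_norm_toLp, dotProduct_comm]
  exact real_inner_le_norm (WithLp.toLp 2 u) (WithLp.toLp 2 v)

lemma norm2_mulVec_le [DecidableEq ι] (M : Matrix ι ι ℝ) (v : ι → ℝ) :
    norm2 (M *ᵥ v) ≤ specNorm M * norm2 v := by
  rw [norm2_eq_norm_toLp, norm2_eq_norm_toLp, ← toEuclideanCLM_toLp]
  exact (toEuclideanCLM (𝕜 := ℝ) M).le_opNorm _

lemma sum_abs_le_sqrt_card_mul_norm2 (c : κ → ℝ) :
    ∑ j, |c j| ≤ √(Fintype.card κ) * norm2 c := by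
  rw [norm2, ← Real.sqrt_mul (by positivity)]
  apply Real.le_sqrt_of_sq_le
  simpa [dotProduct, sq_abs, ← sq] using
    sq_sum_le_card_mul_sum_sq (s := Finset.univ) (f := fun j => |c j|)

lemma dotProduct_transpose_mul_self_mulVec (B : Matrix κ ι ℝ) (u v : ι → ℝ) :
    u ⬝ᵥ (Bᵀ * B) *ᵥ v = (B *ᵥ u) ⬝ᵥ (B *ᵥ v) := by
  rw [← mulVec_mulVec, dotProduct_mulVec, vecMul_transpose]

lemma Matrix.PosSemidef.exists_eq_transpose_mul_self {A : Matrix ι ι ℝ} (hA : A.PosSemidef) :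
    ∃ B : Matrix ι ι ℝ, A = Bᵀ * B := by
  classical
  open scoped MatrixOrder in
  obtain ⟨B, rfl⟩ := CStarAlgebra.nonneg_iff_eq_star_mul_self.mp hA.nonneg
  exact ⟨B, by rw [star_eq_conjTranspose, conjTranspose_eq_transpose_of_trivial]⟩

lemma Matrix.PosSemidef.exists_linearMap_inner_eq {A : Matrix ι ι ℝ} (hA : A.PosSemidef) :
    ∃ T : (ι → ℝ) →ₗ[ℝ] EuclideanSpace ℝ ι,
      (∀ u v, u ⬝ᵥ A *ᵥ v = inner ℝ (T u) (T v)) ∧ ∀ v, normA A v = ‖T v‖ := by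
  obtain ⟨B, rfl⟩ := hA.exists_eq_transpose_mul_self
  refine ⟨(WithLp.linearEquiv 2 ℝ (ι → ℝ)).symm.toLinearMap ∘ₗ B.mulVecLin,
    fun u v => ?_, fun v => ?_⟩
  · simp [dotProduct_transpose_mul_self_mulVec, EuclideanSpace.inner_toLp_toLp, dotProduct_comm]
  · simp [normA, dotProduct_transpose_mul_self_mulVec, ← norm2_eq_norm_toLp, norm2]

lemma normA_nonneg (A : Matrix ι ι ℝ) (v : ι → ℝ) : 0 ≤ normA A v := Real.sqrt_nonneg _

lemma normA_smul (A : Matrix ι ι ℝ) (a : ℝ) (v : ι → ℝ) : normA A (a • v) = |a| * normA A v := by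
  rw [normA, normA, mulVec_smul, smul_dotProduct, dotProduct_smul, smul_eq_mul, smul_eq_mul,
    ← mul_assoc, ← sq, Real.sqrt_mul (sq_nonneg a), Real.sqrt_sq_eq_abs]

section normA

variable {A : Matrix ι ι ℝ}

lemma normA_add_le (hA : A.PosSemidef) (u v : ι → ℝ) :
    normA A (u + v) ≤ normA A u + normA A v := by
  obtain ⟨T, -, hT⟩ := hA.exists_linearMap_inner_eq
  simpa only [hT, map_add] using norm_add_le (T u) (T v)

lemma normA_sum_le {α : Type*} (hA : A.PosSemidef) (s : Finset α) (f : α → ι → ℝ) :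
    normA A (∑ j ∈ s, f j) ≤ ∑ j ∈ s, normA A (f j) := by
  obtain ⟨T, -, hT⟩ := hA.exists_linearMap_inner_eq
  simpa only [hT, map_sum] using norm_sum_le s (fun j => T (f j))

lemma dotProduct_mulVec_le_normA_mul_normA (hA : A.PosSemidef) (u v : ι → ℝ) :
    u ⬝ᵥ A *ᵥ v ≤ normA A u * normA A v := by
  obtain ⟨T, hT, hT'⟩ := hA.exists_linearMap_inner_eq
  simpa only [hT, hT'] using real_inner_le_norm (T u) (T v)

lemma dotProduct_mulVec_comm (hA : A.PosSemidef) (u v : ι → ℝ) :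
    u ⬝ᵥ A *ᵥ v = v ⬝ᵥ A *ᵥ u := by
  obtain ⟨T, hT, -⟩ := hA.exists_linearMap_inner_eq
  rw [hT, hT, real_inner_comm]

lemma normA_le_normA_add (hA : A.PosSemidef) {u w : ι → ℝ} (h : u ⬝ᵥ A *ᵥ w = 0) :
    normA A u ≤ normA A (u + w) := by
  obtain ⟨T, hT, hT'⟩ := hA.exists_linearMap_inner_eq
  rw [hT] at h
  rw [hT', hT', map_add, ← sq_le_sq₀ (norm_nonneg _) (norm_nonneg _),
    norm_add_sq_real, h]
  linarith [sq_nonneg ‖T w‖]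

end normA

section spectral

variable [DecidableEq ι]

lemma normA_le_sqrt_specNorm_mul_norm2 (A : Matrix ι ι ℝ) (v : ι → ℝ) :
    normA A v ≤ √(specNorm A) * norm2 v := by
  rw [norm2, ← Real.sqrt_mul (specNorm_nonneg A)]
  refine Real.sqrt_le_sqrt ((dotProduct_le_norm2_mul_norm2 _ _).trans ?_)
  calc norm2 v * norm2 (A *ᵥ v) ≤ norm2 v * (specNorm A * norm2 v) :=
        mul_le_mul_of_nonneg_left (norm2_mulVec_le A v) (norm2_nonneg v)
    _ = specNorm A * (v ⬝ᵥ v) := by rw [← norm2_mul_self]; ring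

lemma normA_inv_mulVec {A : Matrix ι ι ℝ} (hA : IsUnit A.det) (v : ι → ℝ) :
    normA A⁻¹ (A *ᵥ v) = normA A v := by
  rw [normA, normA, mulVec_mulVec, nonsing_inv_mul _ hA, one_mulVec, dotProduct_comm]

lemma normA_le_sqrt_specNorm_inv_mul_norm2_mulVec {A : Matrix ι ι ℝ} (hA : IsUnit A.det)
    (v : ι → ℝ) :
    normA A v ≤ √(specNorm A⁻¹) * norm2 (A *ᵥ v) :=
  normA_inv_mulVec hA v ▸ normA_le_sqrt_specNorm_mul_norm2 A⁻¹ (A *ᵥ v)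

lemma norm2_le_sqrt_specNorm_inv_mul_normA {A : Matrix ι ι ℝ} (hA : A.PosDef) (c : ι → ℝ) :
    norm2 c ≤ √(specNorm A⁻¹) * normA A c := by
  have hdet : IsUnit A.det := hA.det_pos.ne'.isUnit
  have key : norm2 c * norm2 c ≤ (√(specNorm A⁻¹) * normA A c) * norm2 c :=
    calc norm2 c * norm2 c = c ⬝ᵥ A⁻¹ *ᵥ (A *ᵥ c) := by
          rw [mulVec_mulVec, nonsing_inv_mul _ hdet, one_mulVec, norm2_mul_self]
      _ ≤ normA A⁻¹ c * normA A⁻¹ (A *ᵥ c) :=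
          dotProduct_mulVec_le_normA_mul_normA hA.inv.posSemidef _ _
      _ ≤ (√(specNorm A⁻¹) * norm2 c) * normA A c := by
          rw [normA_inv_mulVec hdet]
          exact mul_le_mul_of_nonneg_right (normA_le_sqrt_specNorm_mul_norm2 _ _) (normA_nonneg _ _)
      _ = (√(specNorm A⁻¹) * normA A c) * norm2 c := by ring
  exact le_of_mul_self_le_mul_right (mul_nonneg (Real.sqrt_nonneg _) (normA_nonneg _ _)) key

end spectral

lemma normA_transpose_mul_mul (A : Matrix ι ι ℝ) (Ψ : Matrix ι κ ℝ) (c : κ → ℝ) :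
    normA (Ψᵀ * A * Ψ) c = normA A (Ψ *ᵥ c) := by
  rw [normA, normA, Matrix.mul_assoc, ← mulVec_mulVec, dotProduct_mulVec, vecMul_transpose,
    ← mulVec_mulVec]

lemma normA_mulVec_le_of_normA_col_le {A : Matrix ι ι ℝ} (hA : A.PosSemidef) (E : Matrix ι κ ℝ)
    {δ : ℝ} (hδ : 0 ≤ δ) (hE : ∀ j, normA A (E.col j) ≤ δ / √(Fintype.card κ)) (c : κ → ℝ) :
    normA A (E *ᵥ c) ≤ δ * norm2 c := by
  set s := √(Fintype.card κ)
  have hδs : δ / s * s ≤ δ := by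
    -- `s = 0` only for empty `κ`, where `δ / s = 0`
    rcases eq_or_ne s 0 with hs | hs
    · simpa [hs] using hδ
    · rw [div_mul_cancel₀ _ hs]
  calc normA A (E *ᵥ c) = normA A (∑ j, c j • E.col j) := by
        simp only [mulVec_eq_sum, op_smul_eq_smul]; rfl
    _ ≤ ∑ j, |c j| * normA A (E.col j) := by
        simpa only [normA_smul] using normA_sum_le hA Finset.univ fun j => c j • E.col j
    _ ≤ ∑ j, |c j| * (δ / s) :=
        Finset.sum_le_sum fun j _ => mul_le_mul_of_nonneg_left (hE j) (abs_nonneg _)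
    _ = δ / s * ∑ j, |c j| := by rw [Finset.mul_sum]; simp only [mul_comm]
    _ ≤ δ / s * (s * norm2 c) := by
        gcongr
        exact sum_abs_le_sqrt_card_mul_norm2 c
    _ ≤ δ * norm2 c := by
        rw [← mul_assoc]
        exact mul_le_mul_of_nonneg_right hδs (norm2_nonneg c)

def IsAOrthogonalProjection (A : Matrix ι ι ℝ) (S : Submodule ℝ (ι → ℝ))
    (p : (ι → ℝ) → ι → ℝ) : Prop :=
  ∀ x, p x ∈ S ∧ ∀ y ∈ S, (x - p x) ⬝ᵥ A *ᵥ y = 0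

namespace IsAOrthogonalProjection

variable {A : Matrix ι ι ℝ} {S : Submodule ℝ (ι → ℝ)} {p : (ι → ℝ) → ι → ℝ}

lemma normA_sub_le (hA : A.PosSemidef) (hp : IsAOrthogonalProjection A S p) (x : ι → ℝ)
    {y : ι → ℝ} (hy : y ∈ S) : normA A (x - p x) ≤ normA A (x - y) := by
  have h := normA_le_normA_add hA ((hp x).2 _ (S.sub_mem (hp x).1 hy))
  rwa [sub_add_sub_cancel] at h

lemma normA_le (hA : A.PosSemidef) (hp : IsAOrthogonalProjection A S p) (x : ι → ℝ) :
    normA A (p x) ≤ normA A x := by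
  have h := normA_le_normA_add hA (w := x - p x)
    (by rw [dotProduct_mulVec_comm hA]; exact (hp x).2 _ (hp x).1)
  rwa [add_sub_cancel] at h

lemma norm2_sub_le_sq_mul [DecidableEq ι] (hA : A.PosDef) (hp : IsAOrthogonalProjection A S p)
    {δ : ℝ} (hδ : ∀ x, normA A (x - p x) ≤ δ * norm2 (A *ᵥ x)) (x : ι → ℝ) :
    norm2 (x - p x) ≤ δ ^ 2 * norm2 (A *ᵥ x) := by
  set e := x - p x
  set z := A⁻¹ *ᵥ e
  have hz : A *ᵥ z = e := by
    rw [mulVec_mulVec, mul_nonsing_inv _ hA.det_pos.ne'.isUnit, one_mulVec]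
  have hδz : normA A (z - p z) ≤ δ * norm2 e := hz ▸ hδ z
  have key : norm2 e * norm2 e ≤ (δ ^ 2 * norm2 (A *ᵥ x)) * norm2 e :=
    calc norm2 e * norm2 e = e ⬝ᵥ A *ᵥ (z - p z) := by
          rw [mulVec_sub, dotProduct_sub, (hp x).2 _ (hp z).1, sub_zero, hz, norm2_mul_self]
      _ ≤ normA A e * normA A (z - p z) :=
          dotProduct_mulVec_le_normA_mul_normA hA.posSemidef _ _
      _ ≤ (δ * norm2 (A *ᵥ x)) * (δ * norm2 e) :=
          mul_le_mul (hδ x) hδz (normA_nonneg _ _) ((normA_nonneg _ _).trans (hδ x))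
      _ = (δ ^ 2 * norm2 (A *ᵥ x)) * norm2 e := by ring
  exact le_of_mul_self_le_mul_right (mul_nonneg (sq_nonneg δ) (norm2_nonneg _)) key

end IsAOrthogonalProjection

omit [Fintype ι] in
lemma Matrix.mem_span_range_col_iff {R : Type*} [CommRing R] (M : Matrix ι κ R) (v : ι → R) :
    v ∈ Submodule.span R (Set.range M.col) ↔ ∃ c, M *ᵥ c = v := by
  rw [← range_mulVecLin, LinearMap.mem_range]
  rfl

lemma norm2_le_specNorm_inv_mul_of_mulVec_eq [DecidableEq ι] [DecidableEq κ] {A : Matrix ι ι ℝ}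
    (hA : A.PosDef) {Ψ : Matrix ι κ ℝ} (hΨ : LinearIndependent ℝ Ψ.col)
    (hAst : specNorm (Ψᵀ * A * Ψ)⁻¹ ≤ specNorm A⁻¹) {S : Submodule ℝ (ι → ℝ)}
    {p : (ι → ℝ) → ι → ℝ} (hp : IsAOrthogonalProjection A S p) {x : ι → ℝ} {c : κ → ℝ}
    (hc : Ψ *ᵥ c = p x) : norm2 c ≤ specNorm A⁻¹ * norm2 (A *ᵥ x) := by
  have hM : (Ψᵀ * A * Ψ).PosDef := by
    simpa using hA.conjTranspose_mul_mul_same (mulVec_injective_iff.mpr hΨ)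
  set s := specNorm A⁻¹
  calc norm2 c ≤ √(specNorm (Ψᵀ * A * Ψ)⁻¹) * normA (Ψᵀ * A * Ψ) c :=
        norm2_le_sqrt_specNorm_inv_mul_normA hM c
    _ ≤ √s * normA A x := by
        rw [normA_transpose_mul_mul, hc]
        exact mul_le_mul (Real.sqrt_le_sqrt hAst) (hp.normA_le hA.posSemidef x)
          (normA_nonneg _ _) (Real.sqrt_nonneg _)
    _ ≤ √s * (√s * norm2 (A *ᵥ x)) := mul_le_mul_of_nonneg_left
        (normA_le_sqrt_specNorm_inv_mul_norm2_mulVec hA.det_pos.ne'.isUnit x) (Real.sqrt_nonneg _)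
    _ = s * norm2 (A *ᵥ x) := by rw [← mul_assoc, Real.mul_self_sqrt (specNorm_nonneg _)]

end

/-- Localization preserves the compression error: if the `A`-orthogonal
projection onto the column span of `Ψ` compresses with error `ε` and
`A_st = ΨᵀAΨ` satisfies `‖A_st⁻¹‖₂ ≤ ‖A⁻¹‖₂`, and `Ψ̃` has columns with
`‖ψ_i − ψ̃_i‖_A ≤ Cε/√N`, then the `A`-orthogonal projection `P^A_{Ψ̃}` onto the column
span of `Ψ̃` satisfies the stated error bounds. -/
theorem localized_compression_error {n N : ℕ}
    (A : Matrix (Fin n) (Fin n) ℝ) (hA : A.PosDef)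
    (Ψ : Matrix (Fin n) (Fin N) ℝ)
    (hΨind : LinearIndependent ℝ (fun j : Fin N => Ψᵀ j))
    (hAst : specNorm (Ψᵀ * A * Ψ)⁻¹ ≤ specNorm A⁻¹)
    (ε : ℝ) (hε : 0 < ε)
    (pΨ : (Fin n → ℝ) → (Fin n → ℝ))
    (hpΨ : ∀ x, pΨ x ∈ Submodule.span ℝ (Set.range fun j : Fin N => Ψᵀ j) ∧
      ∀ y ∈ Submodule.span ℝ (Set.range fun j : Fin N => Ψᵀ j),
        (x - pΨ x) ⬝ᵥ A.mulVec y = 0)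
    (happrox : ∀ x : Fin n → ℝ, normA A (x - pΨ x) ≤ ε * norm2 (A.mulVec x))
    (C : ℝ) (hC : 0 ≤ C)
    (Ψt : Matrix (Fin n) (Fin N) ℝ)
    (hclose : ∀ i : Fin N,
      normA A (fun r => Ψ r i - Ψt r i) ≤ C * ε / Real.sqrt N)
    (pΨt : (Fin n → ℝ) → (Fin n → ℝ))
    (hpΨt : ∀ x, pΨt x ∈ Submodule.span ℝ (Set.range fun j : Fin N => Ψtᵀ j) ∧
      ∀ y ∈ Submodule.span ℝ (Set.range fun j : Fin N => Ψtᵀ j),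
        (x - pΨt x) ⬝ᵥ A.mulVec y = 0) :
    (∀ x : Fin n → ℝ,
      normA A (x - pΨt x) ≤ (1 + C * specNorm A⁻¹) * ε * norm2 (A.mulVec x)) ∧
    (∀ x : Fin n → ℝ,
      norm2 (x - pΨt x) ≤ (1 + C * specNorm A⁻¹) ^ 2 * ε ^ 2 * norm2 (A.mulVec x)) ∧
    (∀ b : Fin n → ℝ,
      norm2 (A⁻¹.mulVec b - pΨt (A⁻¹.mulVec b)) ≤
        (1 + C * specNorm A⁻¹) ^ 2 * ε ^ 2 * norm2 b) := by
  set K := 1 + C * specNorm A⁻¹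
  have hCε : 0 ≤ C * ε := mul_nonneg hC hε.le
  have hΨt : IsAOrthogonalProjection A _ pΨt := hpΨt
  have energy_bound : ∀ x, normA A (x - pΨt x) ≤ K * ε * norm2 (A *ᵥ x) := by
    intro x
    obtain ⟨c, hc⟩ := (Ψ.mem_span_range_col_iff (pΨ x)).mp (hpΨ x).1
    have hcoef := norm2_le_specNorm_inv_mul_of_mulVec_eq hA hΨind hAst hpΨ hc
    have hpert : normA A ((Ψ - Ψt) *ᵥ c) ≤ C * ε * norm2 c :=
      normA_mulVec_le_of_normA_col_le hA.posSemidef _ hCε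
        (fun j => by rw [Fintype.card_fin]; exact hclose j) c
    calc normA A (x - pΨt x) ≤ normA A (x - Ψt *ᵥ c) :=
          hΨt.normA_sub_le hA.posSemidef x ((Ψt.mem_span_range_col_iff _).mpr ⟨c, rfl⟩)
      _ ≤ normA A (x - pΨ x) + normA A ((Ψ - Ψt) *ᵥ c) := by
          simpa only [sub_mulVec, hc, sub_add_sub_cancel] using
            normA_add_le hA.posSemidef (x - pΨ x) ((Ψ - Ψt) *ᵥ c)
      _ ≤ ε * norm2 (A *ᵥ x) + C * ε * (specNorm A⁻¹ * norm2 (A *ᵥ x)) :=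
          add_le_add (happrox x) (hpert.trans (mul_le_mul_of_nonneg_left hcoef hCε))
      _ = K * ε * norm2 (A *ᵥ x) := by ring
  have euclidean_bound : ∀ x, norm2 (x - pΨt x) ≤ K ^ 2 * ε ^ 2 * norm2 (A *ᵥ x) := fun x => by
    simpa only [mul_pow] using hΨt.norm2_sub_le_sq_mul hA energy_bound x
  refine ⟨energy_bound, euclidean_bound, fun b => ?_⟩
  simpa only [mulVec_mulVec, mul_nonsing_inv _ hA.det_pos.ne'.isUnit, one_mulVec] using
    euclidean_bound (A⁻¹ *ᵥ b)
end
end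

section
/- In the energy-decomposition compression setting, for each i and each k ≥ 0, every minimizer ψ_i^k of ‖x‖_A over vectors x ∈ ℝⁿ supported in S_k(P_{j_i}) subject to Φᵀx = e_i satisfies ‖ψ_i‖_A ≤ ‖ψ_i^k‖_A ≤ ‖ψ_i^0‖_A ≤ √(δ(P_{j_i})), where ψ_i is the i-th column of Ψ = A⁻¹Φ(ΦᵀA⁻¹Φ)⁻¹. -/
open Matrix BigOperators
open scoped Classical

noncomputable section

/-!
`ψ_i` minimizes the `A`-energy over all `x` with `Φᵀ x = e_i`, because `A ψ_i` lies in the range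
of `Φ`; minimizing over the nested sets of vectors supported in `S_0(P_j) ⊆ S_k(P_j)` can only
raise the energy. For the last inequality, extend by zero the minimizer of the closed energy
`Ā = overline(A)_{P_j}|_{P_j}` subject to `Φ̂ᵀ x = e_c`: it is admissible for `ψ_i^0`, its
`A`-energy is at most its closed energy since `yᵀ E y ≤ yᵀ E^d y` for symmetric `E`, and that
closed energy equals `((Φ̂ᵀ Ā⁻¹ Φ̂)⁻¹)_cc ≤ δ(P_j)`.
-/

section EnergyMinBasis

variable {ι κ : Type*}

lemma Matrix.PosSemidef.transpose_eq {M : Matrix ι ι ℝ} (hM : M.PosSemidef) : Mᵀ = M := by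
  rw [← conjTranspose_eq_transpose_of_trivial]; exact hM.isHermitian

variable [Fintype ι] [Fintype κ]

lemma Matrix.mulVec_injective_of_mul_eq_one [DecidableEq κ] {L : Matrix κ ι ℝ}
    {K : Matrix ι κ ℝ} (hLK : L * K = 1) : Function.Injective K.mulVec := fun v w h => by
  simpa [mulVec_mulVec, hLK] using congrArg (L *ᵥ ·) h

/-- `y - ψ` lies in `ker Kᵀ`, which is `M`-orthogonal to `ψ` because `M ψ ∈ range K`. -/
lemma dotProduct_mulVec_le_of_mulVec_eq {M : Matrix ι ι ℝ} (hM : M.PosSemidef)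
    (K : Matrix ι κ ℝ) {ψ y : ι → ℝ} {w : κ → ℝ} (hψ : M *ᵥ ψ = K *ᵥ w)
    (hy : Kᵀ *ᵥ y = Kᵀ *ᵥ ψ) : ψ ⬝ᵥ M *ᵥ ψ ≤ y ⬝ᵥ M *ᵥ y := by
  obtain ⟨z, rfl⟩ : ∃ z, y = ψ + z := ⟨y - ψ, by abel⟩
  have hz : Kᵀ *ᵥ z = 0 := by simpa [mulVec_add] using hy
  have horth : z ⬝ᵥ M *ᵥ ψ = 0 := by
    rw [hψ, dotProduct_mulVec, ← mulVec_transpose, hz, zero_dotProduct]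
  have hsymm : ψ ⬝ᵥ M *ᵥ z = z ⬝ᵥ M *ᵥ ψ := by
    rw [dotProduct_mulVec, ← mulVec_transpose, hM.transpose_eq, dotProduct_comm]
  have hzz : 0 ≤ z ⬝ᵥ M *ᵥ z := by simpa using hM.dotProduct_mulVec_nonneg z
  simp only [mulVec_add, dotProduct_add, add_dotProduct, hsymm, horth]
  linarith

variable [DecidableEq ι]

lemma posDef_transpose_mul_inv_mul {M : Matrix ι ι ℝ} (hM : M.PosDef) {K : Matrix ι κ ℝ}
    (hK : Function.Injective K.mulVec) : (Kᵀ * M⁻¹ * K).PosDef := by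
  simpa [conjTranspose_eq_transpose_of_trivial] using hM.inv.conjTranspose_mul_mul_same hK

variable [DecidableEq κ]

def energyMinBasis (M : Matrix ι ι ℝ) (K : Matrix ι κ ℝ) : Matrix ι κ ℝ :=
  M⁻¹ * K * (Kᵀ * M⁻¹ * K)⁻¹

variable {M : Matrix ι ι ℝ} {K : Matrix ι κ ℝ}

lemma transpose_mul_energyMinBasis (hM : M.PosDef) (hK : Function.Injective K.mulVec) :
    Kᵀ * energyMinBasis M K = 1 := by
  have hdet := (isUnit_iff_isUnit_det _).mp (posDef_transpose_mul_inv_mul hM hK).isUnit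
  rw [energyMinBasis, ← Matrix.mul_assoc, ← Matrix.mul_assoc, mul_nonsing_inv _ hdet]

lemma mul_energyMinBasis (hM : M.PosDef) :
    M * energyMinBasis M K = K * (Kᵀ * M⁻¹ * K)⁻¹ := by
  rw [energyMinBasis, ← Matrix.mul_assoc, ← Matrix.mul_assoc,
    mul_nonsing_inv _ ((isUnit_iff_isUnit_det M).mp hM.isUnit), Matrix.one_mul]

lemma transpose_mulVec_col_energyMinBasis (hM : M.PosDef) (hK : Function.Injective K.mulVec)
    (c : κ) : Kᵀ *ᵥ (energyMinBasis M K).col c = Pi.single c 1 := by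
  rw [← mulVec_single_one, mulVec_mulVec, transpose_mul_energyMinBasis hM hK, one_mulVec]

lemma mulVec_col_energyMinBasis (hM : M.PosDef) (c : κ) :
    M *ᵥ (energyMinBasis M K).col c = K *ᵥ (Kᵀ * M⁻¹ * K)⁻¹.col c := by
  rw [← mulVec_single_one, ← mulVec_single_one, mulVec_mulVec, mul_energyMinBasis hM,
    mulVec_mulVec]

lemma dotProduct_mulVec_col_energyMinBasis (hM : M.PosDef) (hK : Function.Injective K.mulVec)
    (c : κ) : (energyMinBasis M K).col c ⬝ᵥ M *ᵥ (energyMinBasis M K).col c =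
      (Kᵀ * M⁻¹ * K)⁻¹ c c := by
  rw [mulVec_col_energyMinBasis hM, dotProduct_mulVec, ← mulVec_transpose,
    transpose_mulVec_col_energyMinBasis hM hK, single_one_dotProduct]
  rfl

lemma col_energyMinBasis_le (hM : M.PosDef) (hK : Function.Injective K.mulVec) (c : κ)
    {y : ι → ℝ} (hy : Kᵀ *ᵥ y = Pi.single c 1) :
    (energyMinBasis M K).col c ⬝ᵥ M *ᵥ (energyMinBasis M K).col c ≤ y ⬝ᵥ M *ᵥ y :=
  dotProduct_mulVec_le_of_mulVec_eq hM.posSemidef K (mulVec_col_energyMinBasis hM c)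
    (hy.trans (transpose_mulVec_col_energyMinBasis hM hK c).symm)

end EnergyMinBasis

open scoped RealInnerProductSpace in
lemma apply_self_le_specNorm {ι : Type} [Fintype ι] [DecidableEq ι] (C : Matrix ι ι ℝ)
    (c : ι) : C c c ≤ specNorm C := by
  set e : EuclideanSpace ℝ ι := EuclideanSpace.single c 1
  have he : ‖e‖ = 1 := by simp [e]
  calc C c c = ⟪e, toEuclideanCLM (𝕜 := ℝ) C e⟫ := by
        rw [inner_toEuclideanCLM]; simp [e]
    _ ≤ ‖e‖ * ‖toEuclideanCLM (𝕜 := ℝ) C e‖ := real_inner_le_norm _ _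
    _ ≤ ‖e‖ * (‖toEuclideanCLM (𝕜 := ℝ) C‖ * ‖e‖) := by
        gcongr; exact ContinuousLinearMap.le_opNorm _ _
    _ = specNorm C := by rw [he, specNorm]; ring

section EnergyDecomposition

variable {n : ℕ}

lemma dotProduct_mulVec_le_diagConc {E : Matrix (Fin n) (Fin n) ℝ} (hE : Eᵀ = E)
    (y : Fin n → ℝ) : y ⬝ᵥ E *ᵥ y ≤ y ⬝ᵥ diagConc E *ᵥ y := by
  have hterm : ∀ i j,
      y i * (E i j * y j) ≤ |E i j| * y i ^ 2 / 2 + |E j i| * y j ^ 2 / 2 := by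
    intro i j
    rw [← transpose_apply E i j, hE]
    calc y i * (E i j * y j) ≤ |E i j| * (|y i| * |y j|) := by
          rw [← abs_mul, ← abs_mul, mul_left_comm]; exact le_abs_self _
      _ ≤ |E i j| * ((|y i| ^ 2 + |y j| ^ 2) / 2) := by
          gcongr; nlinarith [sq_nonneg (|y i| - |y j|)]
      _ = _ := by simp only [sq_abs]; ring
  calc y ⬝ᵥ E *ᵥ y = ∑ i, ∑ j, y i * (E i j * y j) := by
        simp only [dotProduct, mulVec, Finset.mul_sum]
    _ ≤ ∑ i, ∑ j, (|E i j| * y i ^ 2 / 2 + |E j i| * y j ^ 2 / 2) := by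
        gcongr with i _ j _; exact hterm i j
    _ = ∑ i, ∑ j, |E i j| * y i ^ 2 := by
        simp only [Finset.sum_add_distrib]
        rw [Finset.sum_comm (f := fun i j => |E j i| * y j ^ 2 / 2), ← Finset.sum_add_distrib]
        simp only [← Finset.sum_add_distrib, add_halves]
    _ = y ⬝ᵥ diagConc E *ᵥ y := by
        simp only [dotProduct, diagConc, mulVec_diagonal, Finset.sum_mul, Finset.mul_sum]
        congr! 2 with i _ j
        ring

lemma projSet_mulVec_of_support {S : Finset (Fin n)} {x : Fin n → ℝ}
    (hx : ∀ r ∉ S, x r = 0) : projSet S *ᵥ x = x := by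
  funext r
  by_cases hr : r ∈ S <;> simp [projSet, mulVec_diagonal, hr, hx]

lemma dotProduct_mulVec_projSet_mul_mul_projSet {S : Finset (Fin n)} {x : Fin n → ℝ}
    (hx : ∀ r ∉ S, x r = 0) (D : Matrix (Fin n) (Fin n) ℝ) :
    x ⬝ᵥ (projSet S * D * projSet S) *ᵥ x = x ⬝ᵥ D *ᵥ x := by
  rw [← mulVec_mulVec, projSet_mulVec_of_support hx, ← mulVec_mulVec, dotProduct_mulVec,
    ← mulVec_transpose, projSet, diagonal_transpose, ← projSet, projSet_mulVec_of_support hx]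

lemma dotProduct_mulVec_sum_le_closedEnergy {m : ℕ} {E : Fin m → Matrix (Fin n) (Fin n) ℝ}
    (hE : ∀ k, (E k).PosSemidef) {S : Finset (Fin n)} {x : Fin n → ℝ}
    (hx : ∀ r ∉ S, x r = 0) : x ⬝ᵥ (∑ k, E k) *ᵥ x ≤ x ⬝ᵥ closedEnergy E S *ᵥ x := by
  have hsplit : closedEnergy E S = ∑ k, if InteriorTo (E k) S then E k
      else projSet S * diagConc (E k) * projSet S := by
    rw [closedEnergy, interiorEnergy, ← Finset.sum_add_distrib]
    congr! 1 with k; split_ifs <;> simp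
  simp only [hsplit, sum_mulVec, dotProduct_sum]
  gcongr with k
  split_ifs
  · exact le_rfl
  · rw [dotProduct_mulVec_projSet_mul_mul_projSet hx]
    exact dotProduct_mulVec_le_diagConc (hE k).transpose_eq x

end EnergyDecomposition

section ExtendZero

variable {ι R : Type*} [DecidableEq ι] [CommSemiring R] {S : Finset ι}

def extendZero (S : Finset ι) (v : S → R) : ι → R :=
  fun r => if h : r ∈ S then v ⟨r, h⟩ else 0

lemma extendZero_of_not_mem {v : S → R} {r : ι} (hr : r ∉ S) : extendZero S v r = 0 :=
  dif_neg hr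

lemma extendZero_restrict {x : ι → R} (hx : ∀ r ∉ S, x r = 0) :
    extendZero S (fun s : S => x s) = x := by
  funext r; by_cases hr : r ∈ S <;> simp [extendZero, hr, hx]

variable [Fintype ι]

lemma dotProduct_extendZero (u : ι → R) (v : S → R) :
    u ⬝ᵥ extendZero S v = (fun s : S => u s) ⬝ᵥ v := by
  simp only [dotProduct, extendZero, mul_dite, mul_zero]
  rw [Finset.univ_eq_attach]
  exact (Finset.sum_attach_eq_sum_dite S fun s => u s * v s).symm

lemma mulVec_extendZero {κ : Type*} (K : Matrix κ ι R) (v : S → R) :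
    K *ᵥ extendZero S v = K.submatrix id Subtype.val *ᵥ v :=
  funext fun _ => dotProduct_extendZero _ v

lemma dotProduct_mulVec_extendZero (M : Matrix ι ι R) (v : S → R) :
    extendZero S v ⬝ᵥ M *ᵥ extendZero S v =
      v ⬝ᵥ M.submatrix Subtype.val Subtype.val *ᵥ v := by
  rw [mulVec_extendZero, dotProduct_comm, dotProduct_extendZero, dotProduct_comm]
  rfl

lemma transpose_mul_self_submatrix_of_support {κ : Type*} {K : Matrix ι κ R}
    (hK : ∀ r ∉ S, ∀ c, K r c = 0) :
    (K.submatrix (Subtype.val : S → ι) id)ᵀ * K.submatrix Subtype.val id = Kᵀ * K := by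
  ext c c'
  have hcol : extendZero S (fun s : S => K s c') = K.col c' :=
    extendZero_restrict fun r hr => hK r hr c'
  calc _ = (fun s : S => K s c) ⬝ᵥ fun s : S => K s c' := rfl
    _ = K.col c ⬝ᵥ K.col c' := by rw [← hcol, dotProduct_extendZero]; rfl
    _ = _ := rfl

end ExtendZero

section BigPhi

variable {n M : ℕ} {P : Fin M → Finset (Fin n)} {q : Fin M → ℕ}
  {Φ : (j : Fin M) → Matrix (Fin n) (Fin (q j)) ℝ}

lemma mul_eq_zero_of_disjoint_support (hdisj : ∀ j j', j ≠ j' → Disjoint (P j) (P j'))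
    (hsupp : ∀ j r, r ∉ P j → ∀ c, Φ j r c = 0) {j j' : Fin M} (hj : j ≠ j') (r : Fin n)
    (c : Fin (q j)) (c' : Fin (q j')) : Φ j r c * Φ j' r c' = 0 := by
  by_cases hr : r ∈ P j
  · rw [hsupp j' r (Finset.disjoint_left.mp (hdisj j j' hj) hr), mul_zero]
  · rw [hsupp j r hr, zero_mul]

lemma bigPhi_transpose_mul_self (hdisj : ∀ j j', j ≠ j' → Disjoint (P j) (P j'))
    (hsupp : ∀ j r, r ∉ P j → ∀ c, Φ j r c = 0) (horth : ∀ j, (Φ j)ᵀ * Φ j = 1) :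
    (bigPhi q Φ)ᵀ * bigPhi q Φ = 1 := by
  ext ⟨j, c⟩ ⟨j', c'⟩
  by_cases hj : j = j'
  · subst hj
    calc _ = ((Φ j)ᵀ * Φ j) c c' := rfl
      _ = _ := by simp [horth j, one_apply]
  · calc _ = ∑ r, Φ j r c * Φ j' r c' := rfl
      _ = _ := by
        rw [one_apply_ne (by simp [hj])]
        exact Finset.sum_eq_zero fun r _ => mul_eq_zero_of_disjoint_support hdisj hsupp hj r c c'

lemma bigPhi_transpose_mulVec_extendZero (hdisj : ∀ j j', j ≠ j' → Disjoint (P j) (P j'))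
    (hsupp : ∀ j r, r ∉ P j → ∀ c, Φ j r c = 0) {j : Fin M} {c : Fin (q j)} {v : P j → ℝ}
    (hv : ((Φ j).submatrix Subtype.val id)ᵀ *ᵥ v = Pi.single c 1) :
    (bigPhi q Φ)ᵀ *ᵥ extendZero (P j) v = Pi.single ⟨j, c⟩ 1 := by
  ext ⟨j', c'⟩
  rw [mulVec_extendZero]
  by_cases hj : j' = j
  · subst hj
    exact (congrFun hv c').trans (by simp [Pi.single_apply])
  · rw [Pi.single_eq_of_ne (by simp [hj])]
    exact Finset.sum_eq_zero fun s _ => mul_eq_zero_of_left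
      (hsupp j' s (Finset.disjoint_left.mp (hdisj j j' (Ne.symm hj)) s.2) c') _

end BigPhi

lemma layer_mono {n m M : ℕ} (E : Fin m → Matrix (Fin n) (Fin n) ℝ)
    (P : Fin M → Finset (Fin n)) (j : Fin M) : Monotone (layer E P j) :=
  monotone_nat_of_le_succ fun _ => Finset.subset_union_left

lemma IsMinimizerOn.dotProduct_mulVec_le_of_subset {n : ℕ} {ι : Type} [Fintype ι]
    [DecidableEq ι] {A : Matrix (Fin n) (Fin n) ℝ} {Φ : Matrix (Fin n) ι ℝ} {i : ι}
    {S T : Finset (Fin n)} {ψ φ : Fin n → ℝ} (hψ : IsMinimizerOn A Φ S i ψ)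
    (hφ : IsMinimizerOn A Φ T i φ) (hST : S ⊆ T) : φ ⬝ᵥ A *ᵥ φ ≤ ψ ⬝ᵥ A *ᵥ ψ :=
  hφ.2.2 ψ (fun r hr => hψ.1 r fun h => hr (hST h)) hψ.2.1

lemma IsMinimizerOn.dotProduct_mulVec_le_condFactor {n m M : ℕ}
    {A : Matrix (Fin n) (Fin n) ℝ} {E : Fin m → Matrix (Fin n) (Fin n) ℝ}
    (hE : ∀ k, (E k).PosSemidef) (hsum : A = ∑ k, E k) {P : Fin M → Finset (Fin n)}
    (hdisj : ∀ j j', j ≠ j' → Disjoint (P j) (P j')) {q : Fin M → ℕ}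
    {Φ : (j : Fin M) → Matrix (Fin n) (Fin (q j)) ℝ}
    (hsupp : ∀ j r, r ∉ P j → ∀ c, Φ j r c = 0) (horth : ∀ j, (Φ j)ᵀ * Φ j = 1) {j : Fin M}
    (hPD : ((closedEnergy E (P j)).submatrix (Subtype.val : P j → Fin n) Subtype.val).PosDef)
    {c : Fin (q j)} {ψ : Fin n → ℝ} (hψ : IsMinimizerOn A (bigPhi q Φ) (P j) ⟨j, c⟩ ψ) :
    ψ ⬝ᵥ A *ᵥ ψ ≤ condFactor E (P j) (Φ j) := by
  have hΦj : Function.Injective ((Φ j).submatrix (Subtype.val : P j → Fin n) id).mulVec :=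
    mulVec_injective_of_mul_eq_one
      ((transpose_mul_self_submatrix_of_support (hsupp j)).trans (horth j))
  set x := extendZero (P j) ((energyMinBasis ((closedEnergy E (P j)).submatrix
    Subtype.val Subtype.val) ((Φ j).submatrix Subtype.val id)).col c)
  have hx : ∀ r ∉ P j, x r = 0 := fun _ hr => extendZero_of_not_mem hr
  calc ψ ⬝ᵥ A *ᵥ ψ ≤ x ⬝ᵥ A *ᵥ x := hψ.2.2 x hx
        (bigPhi_transpose_mulVec_extendZero hdisj hsupp
          (transpose_mulVec_col_energyMinBasis hPD hΦj c))
    _ ≤ x ⬝ᵥ closedEnergy E (P j) *ᵥ x := hsum ▸ dotProduct_mulVec_sum_le_closedEnergy hE hx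
    _ = _ := dotProduct_mulVec_extendZero _ _
    _ = _ := dotProduct_mulVec_col_energyMinBasis hPD hΦj c
    _ ≤ condFactor E (P j) (Φ j) := apply_self_le_specNorm _ c

/-- In the energy-decomposition compression setting, for each column
index `i` and each `k ≥ 0`, every minimizer `ψ_i^k` of `‖x‖_A` over vectors supported in
`S_k(P_{j_i})` subject to `Φᵀx = e_i` satisfies
`‖ψ_i‖_A ≤ ‖ψ_i^k‖_A ≤ ‖ψ_i^0‖_A ≤ √(δ(P_{j_i}))`, where `ψ_i` is the `i`-th column of
`Ψ = A⁻¹Φ(ΦᵀA⁻¹Φ)⁻¹`. -/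
theorem energy_norm_chain_of_local_minimizers {n m M : ℕ}
    (A : Matrix (Fin n) (Fin n) ℝ) (hA : A.PosDef)
    (E : Fin m → Matrix (Fin n) (Fin n) ℝ) (hE : ∀ k, (E k).PosSemidef)
    (hsum : A = ∑ k, E k)
    (P : Fin M → Finset (Fin n)) (hP : IsPartition P)
    (q : Fin M → ℕ)
    (Φ : (j : Fin M) → Matrix (Fin n) (Fin (q j)) ℝ)
    (hΦsupp : ∀ j r, r ∉ P j → ∀ c, Φ j r c = 0)
    (hΦorth : ∀ j, (Φ j)ᵀ * Φ j = 1)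
    (hclosedPD : ∀ j, (((closedEnergy E (P j)).submatrix
        (Subtype.val : {i // i ∈ P j} → Fin n) Subtype.val)).PosDef)
    (Ψ : Matrix (Fin n) ((j : Fin M) × Fin (q j)) ℝ)
    (hΨ : Ψ = A⁻¹ * bigPhi q Φ * ((bigPhi q Φ)ᵀ * A⁻¹ * bigPhi q Φ)⁻¹)
    (i : (j : Fin M) × Fin (q j)) (k : ℕ)
    (ψik ψi0 : Fin n → ℝ)
    (hψik : IsMinimizerOn A (bigPhi q Φ) (layer E P i.1 k) i ψik)
    (hψi0 : IsMinimizerOn A (bigPhi q Φ) (layer E P i.1 0) i ψi0) :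
    normA A (fun r => Ψ r i) ≤ normA A ψik ∧
    normA A ψik ≤ normA A ψi0 ∧
    normA A ψi0 ≤ Real.sqrt (condFactor E (P i.1) (Φ i.1)) := by
  have hΦ : Function.Injective (bigPhi q Φ).mulVec :=
    mulVec_injective_of_mul_eq_one (bigPhi_transpose_mul_self hP.2.1 hΦsupp hΦorth)
  have hΨi : (fun r => Ψ r i) = (energyMinBasis A (bigPhi q Φ)).col i := by rw [hΨ]; rfl
  refine ⟨Real.sqrt_le_sqrt ?_, Real.sqrt_le_sqrt ?_, Real.sqrt_le_sqrt ?_⟩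
  · rw [hΨi]
    exact col_energyMinBasis_le hA hΦ i hψik.2.1
  · exact hψi0.dotProduct_mulVec_le_of_subset hψik (layer_mono E P i.1 k.zero_le)
  · exact hψi0.dotProduct_mulVec_le_condFactor hE hsum hP.2.1 hΦsupp hΦorth (hclosedPD i.1)
end
end

section
/- Let A be an n×n real symmetric positive definite matrix, Φ an n×N matrix with full column rank, U an n×(n−N) matrix with full column rank satisfying ΦᵀU = 0, and Ψ = A⁻¹Φ(ΦᵀA⁻¹Φ)⁻¹. Then UᵀAΨ = 0, the n×n matrix [U Ψ] is invertible, and A⁻¹ = U(UᵀAU)⁻¹Uᵀ + Ψ(ΨᵀAΨ)⁻¹Ψᵀ. -/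
open Matrix BigOperators

noncomputable section

/-
The columns of `U` and of `Ψ` together form a basis: `Φᵀ [U Ψ] = [0 I]` because `ΦᵀU = 0` and
`ΦᵀΨ = I`, so `[U Ψ]` is injective, and it is square. Since `AΨ = Φ(ΦᵀA⁻¹Φ)⁻¹`, the blocks are
`A`-orthogonal: `UᵀAΨ = (ΦᵀU)ᵀ(ΦᵀA⁻¹Φ)⁻¹ = 0`. Hence `X = U(UᵀAU)⁻¹Uᵀ + Ψ(ΨᵀAΨ)⁻¹Ψᵀ` satisfies
`XAU = U` and `XAΨ = Ψ`; as these columns span, `XA = I`, i.e. `X = A⁻¹`.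
-/

namespace Matrix

variable {n m k R : Type*} [Fintype n] [Fintype m] [Fintype k]

theorem PosDef.transpose_mul_mul_same [CommRing R] [PartialOrder R] [StarRing R] [TrivialStar R]
    {A : Matrix n n R} {B : Matrix n m R} (hA : A.PosDef) (hB : Function.Injective B.mulVec) :
    (Bᵀ * A * B).PosDef := by
  simpa only [conjTranspose_eq_transpose_of_trivial] using hA.conjTranspose_mul_mul_same hB

theorem eq_of_mul_eq_mul_of_surjective_mulVec {l : Type*} [CommRing R] {B B' : Matrix l n R}
    {C : Matrix n m R} (hC : Function.Surjective C.mulVec) (h : B * C = B' * C) : B = B' := by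
  rw [ext_iff_mulVec]
  intro v
  obtain ⟨w, rfl⟩ := hC v
  rw [mulVec_mulVec, mulVec_mulVec, h]

/-- Applying `Φᵀ` to `U x + Ψ y` recovers `y`, and then `U x` determines `x`. -/
theorem injective_mulVec_fromCols [CommRing R] [DecidableEq k] {U : Matrix n m R}
    {Ψ Φ : Matrix n k R} (hU : Function.Injective U.mulVec) (hΦU : Φᵀ * U = 0)
    (hΦΨ : Φᵀ * Ψ = 1) : Function.Injective (fromCols U Ψ).mulVec := by
  intro v w h
  have hr : v ∘ Sum.inr = w ∘ Sum.inr := by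
    simpa [mulVec_add, mulVec_mulVec, hΦU, hΦΨ] using congrArg (Φᵀ *ᵥ ·) h
  have hl : v ∘ Sum.inl = w ∘ Sum.inl := hU (by simpa [hr] using h)
  ext (i | i)
  · exact congrFun hl i
  · exact congrFun hr i

theorem bijective_mulVecLin_fromCols [Field R] [DecidableEq k] {U : Matrix n m R}
    {Ψ Φ : Matrix n k R} (hcard : Fintype.card m + Fintype.card k = Fintype.card n)
    (hU : Function.Injective U.mulVec) (hΦU : Φᵀ * U = 0) (hΦΨ : Φᵀ * Ψ = 1) :
    Function.Bijective (fromCols U Ψ).mulVecLin := by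
  have hinj := injective_mulVec_fromCols hU hΦU hΦΨ
  refine ⟨hinj, (LinearMap.injective_iff_surjective_of_finrank_eq_finrank ?_).mp hinj⟩
  simp [hcard]

/-- With `X` the right-hand side, `X * A` fixes every column of `U` and of `Ψ`, and these
columns span. -/
theorem inv_eq_add_of_transpose_mul_mul_eq_zero [CommRing R] [DecidableEq n] [DecidableEq m]
    [DecidableEq k] {A : Matrix n n R} (hA : Aᵀ = A) {U : Matrix n m R} {Ψ : Matrix n k R}
    (hK : IsUnit (Uᵀ * A * U).det) (hS : IsUnit (Ψᵀ * A * Ψ).det) (hUΨ : Uᵀ * A * Ψ = 0)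
    (hC : Function.Surjective (fromCols U Ψ).mulVec) :
    A⁻¹ = U * (Uᵀ * A * U)⁻¹ * Uᵀ + Ψ * (Ψᵀ * A * Ψ)⁻¹ * Ψᵀ := by
  have hΨU : Ψᵀ * A * U = 0 := by
    simpa [transpose_mul, hA, Matrix.mul_assoc] using congrArg transpose hUΨ
  refine inv_eq_left_inv (eq_of_mul_eq_mul_of_surjective_mulVec hC ?_)
  rw [Matrix.one_mul, mul_fromCols]
  congr 1
  · calc
      _ = U * ((Uᵀ * A * U)⁻¹ * (Uᵀ * A * U)) + Ψ * ((Ψᵀ * A * Ψ)⁻¹ * (Ψᵀ * A * U)) := by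
          simp only [Matrix.add_mul, Matrix.mul_assoc]
      _ = U := by
          simp only [nonsing_inv_mul _ hK, hΨU, Matrix.mul_zero, Matrix.mul_one, add_zero]
  · calc
      _ = U * ((Uᵀ * A * U)⁻¹ * (Uᵀ * A * Ψ)) + Ψ * ((Ψᵀ * A * Ψ)⁻¹ * (Ψᵀ * A * Ψ)) := by
          simp only [Matrix.add_mul, Matrix.mul_assoc]
      _ = Ψ := by
          simp only [nonsing_inv_mul _ hS, hUΨ, Matrix.mul_zero, Matrix.mul_one, zero_add]

end Matrix

/-- One-level operator decomposition: with `ΦᵀU = 0` and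
`Ψ = A⁻¹Φ(ΦᵀA⁻¹Φ)⁻¹`, we have `UᵀAΨ = 0`, the matrix `[U Ψ]` is invertible, and
`A⁻¹ = U(UᵀAU)⁻¹Uᵀ + Ψ(ΨᵀAΨ)⁻¹Ψᵀ`. -/
theorem one_level_operator_decomposition {n N : ℕ}
    (A : Matrix (Fin n) (Fin n) ℝ) (hA : A.PosDef)
    (Φ : Matrix (Fin n) (Fin N) ℝ)
    (hΦind : LinearIndependent ℝ (fun i : Fin N => Φᵀ i))
    (U : Matrix (Fin n) (Fin (n - N)) ℝ)
    (hUind : LinearIndependent ℝ (fun i : Fin (n - N) => Uᵀ i))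
    (hΦU : Φᵀ * U = 0)
    (Ψ : Matrix (Fin n) (Fin N) ℝ)
    (hΨ : Ψ = A⁻¹ * Φ * (Φᵀ * A⁻¹ * Φ)⁻¹) :
    Uᵀ * A * Ψ = 0 ∧
    Function.Bijective (Matrix.mulVecLin (Matrix.fromCols U Ψ)) ∧
    A⁻¹ = U * (Uᵀ * A * U)⁻¹ * Uᵀ + Ψ * (Ψᵀ * A * Ψ)⁻¹ * Ψᵀ := by
  have hΦinj : Function.Injective Φ.mulVec := mulVec_injective_iff.mpr hΦind
  have hUinj : Function.Injective U.mulVec := mulVec_injective_iff.mpr hUind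
  set M := Φᵀ * A⁻¹ * Φ
  have hM : IsUnit M.det := (hA.inv.transpose_mul_mul_same hΦinj).det_pos.ne'.isUnit
  have hK : IsUnit (Uᵀ * A * U).det := (hA.transpose_mul_mul_same hUinj).det_pos.ne'.isUnit
  have hAΨ : A * Ψ = Φ * M⁻¹ := by
    rw [hΨ, Matrix.mul_assoc, mul_nonsing_inv_cancel_left A _ hA.det_pos.ne'.isUnit]
  have hΦΨ : Φᵀ * Ψ = 1 := by
    rw [hΨ, ← Matrix.mul_assoc, ← Matrix.mul_assoc, mul_nonsing_inv M hM]
  have hUΦ : Uᵀ * Φ = 0 := by simpa using congrArg transpose hΦU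
  have hΨΦ : Ψᵀ * Φ = 1 := by simpa using congrArg transpose hΦΨ
  have hUAΨ : Uᵀ * A * Ψ = 0 := by
    rw [Matrix.mul_assoc, hAΨ, ← Matrix.mul_assoc, hUΦ, Matrix.zero_mul]
  have hS : IsUnit (Ψᵀ * A * Ψ).det := by
    rw [Matrix.mul_assoc, hAΨ, ← Matrix.mul_assoc, hΨΦ, Matrix.one_mul]
    exact isUnit_nonsing_inv_det M hM
  have hNn : N ≤ n := by simpa using hΦind.fintype_card_le_finrank
  have hC := bijective_mulVecLin_fromCols (by simp [hNn]) hUinj hΦU hΦΨ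
  have hAsymm : Aᵀ = A := (isHermitian_iff_isSymm.mp hA.isHermitian).eq
  exact ⟨hUAΨ, hC, inv_eq_add_of_transpose_mul_mul_eq_zero hAsymm hK hS hUAΨ hC.2⟩
end
end
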